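/- arXiv:2209.03537 — 3 statements merged into one kernel-verified Lean document; each statement's English description precedes it below -/
import Mathlib

section
/- For any functions f, g, h : V → ℂ on the vertices of a square, 2·Tr(ρ(f)[F,ρ(g)][F,ρ(h)]M) = f(0)(g_{0,1}h_{1,2} - g_{0,3}h_{3,2}) + f(2)(g_{2,3}h_{3,0} - g_{2,1}h_{1,0}) - f(1)(g_{1,0}h_{0,3} - g_{1,2}h_{2,3}) - f(3)(g_{3,2}h_{2,1} - g_{3,0}h_{0,1}), where a_{i,j} := a(j) - a(i). -/
/-!
Write `F = F₀ / √2` with `F₀` the 0/±1 matrix. Since `ρ(g)` is diagonal, the commutator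
`[F₀, ρ(g)]` has entries `(F₀)ᵢⱼ (gⱼ - gᵢ)` (indices read through the vertex ordering of `ρ`),
which is where the edge differences `g_{i,j}` come from; the trace is then a finite sum, and the
two factors `1/√2` cancel the factor `2`.
-/

open Matrix

noncomputable def Fop : Matrix (Fin 4) (Fin 4) ℂ :=
  ((Real.sqrt 2 : ℝ) : ℂ)⁻¹ • !![0,0,1,1; 0,0,-1,1; 1,-1,0,0; 1,1,0,0]

/-- Multiplication operator: diagonal of vertex values, ordered v₀, v₂, v₁, v₃. -/
def rho (f : Fin 4 → ℂ) : Matrix (Fin 4) (Fin 4) ℂ :=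
  !![f 0, 0, 0, 0; 0, f 2, 0, 0; 0, 0, f 1, 0; 0, 0, 0, f 3]

def Mmat : Matrix (Fin 4) (Fin 4) ℂ :=
  !![0,1,0,0; -1,0,0,0; 0,0,0,1; 0,0,-1,0]

def unscaledFop : Matrix (Fin 4) (Fin 4) ℂ :=
  !![0,0,1,1; 0,0,-1,1; 1,-1,0,0; 1,1,0,0]

lemma smul_mul_sub_mul_smul {R A : Type*} [CommRing R] [Ring A] [Algebra R A] (c : R) (a x : A) :
    c • a * x - x * c • a = c • (a * x - x * a) := by
  rw [smul_mul_assoc, mul_smul_comm, smul_sub]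

lemma Complex.ofReal_sqrt_inv_sq {x : ℝ} (hx : 0 ≤ x) : ((√x : ℝ) : ℂ)⁻¹ ^ 2 = (x : ℂ)⁻¹ := by
  rw [inv_pow, ← Complex.ofReal_pow, Real.sq_sqrt hx]

lemma Matrix.mul_diagonal_sub_diagonal_mul_apply {n R : Type*} [Fintype n] [DecidableEq n]
    [CommRing R] (A : Matrix n n R) (d : n → R) (i j : n) :
    (A * diagonal d - diagonal d * A) i j = A i j * (d j - d i) := by
  rw [Matrix.sub_apply, mul_diagonal, diagonal_mul, mul_sub, mul_comm (d i)]

lemma rho_eq_diagonal (f : Fin 4 → ℂ) : rho f = diagonal ![f 0, f 2, f 1, f 3] := by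
  ext i j
  fin_cases i <;> fin_cases j <;> rfl

lemma trace_rho_mul_unscaledFop_commutators_mul_Mmat (f g h : Fin 4 → ℂ) :
    (rho f * (unscaledFop * rho g - rho g * unscaledFop) *
      (unscaledFop * rho h - rho h * unscaledFop) * Mmat).trace
    = f 0 * ((g 1 - g 0) * (h 2 - h 1) - (g 3 - g 0) * (h 2 - h 3))
      + f 2 * ((g 3 - g 2) * (h 0 - h 3) - (g 1 - g 2) * (h 0 - h 1))
      - f 1 * ((g 0 - g 1) * (h 3 - h 0) - (g 2 - g 1) * (h 3 - h 2))
      - f 3 * ((g 2 - g 3) * (h 1 - h 2) - (g 0 - g 3) * (h 1 - h 0)) := by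
  simp only [rho_eq_diagonal, Matrix.mul_assoc, trace, diag, diagonal_mul, Fin.sum_univ_four]
  simp only [mul_apply, mul_diagonal_sub_diagonal_mul_apply, Fin.sum_univ_four, unscaledFop, Mmat,
    of_apply, cons_val', cons_val_zero, cons_val_one, cons_val, cons_val_fin_one]
  ring

theorem stmt3 (f g h : Fin 4 → ℂ) :
    2 * (rho f * (Fop * rho g - rho g * Fop) * (Fop * rho h - rho h * Fop) * Mmat).trace
    = f 0 * ((g 1 - g 0) * (h 2 - h 1) - (g 3 - g 0) * (h 2 - h 3))
      + f 2 * ((g 3 - g 2) * (h 0 - h 3) - (g 1 - g 2) * (h 0 - h 1))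
      - f 1 * ((g 0 - g 1) * (h 3 - h 0) - (g 2 - g 1) * (h 3 - h 2))
      - f 3 * ((g 2 - g 3) * (h 1 - h 2) - (g 0 - g 3) * (h 1 - h 0)) := by
  have hF : Fop = ((√2 : ℝ) : ℂ)⁻¹ • unscaledFop := rfl
  rw [hF, smul_mul_sub_mul_smul, smul_mul_sub_mul_smul]
  simp only [mul_smul_comm, smul_mul_assoc, smul_smul, trace_smul, smul_eq_mul]
  rw [← sq, Complex.ofReal_sqrt_inv_sq zero_le_two, ← mul_assoc,
    Complex.ofReal_ofNat, mul_inv_cancel₀ two_ne_zero, one_mul]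
  exact trace_rho_mul_unscaledFop_commutators_mul_Mmat f g h
end

section
/- The Hausdorff dimension of the Cantor dust CD (the attractor of the IFS {x/3, x/3+(0,2/3), x/3+(2/3,0), x/3+(2/3,2/3)} on [0,1]²) equals log 4 / log 3. -/
/-!
A nonempty closed set `K ⊆ [0, 1]²` invariant under the four maps is `C × C`, `C` the
middle-thirds Cantor set: `K` lies in every product of pre-Cantor sets, and every point of `C × C`
is within `3⁻ⁿ` of an `n`-fold image of `K`.

Upper bound: `C × C` is covered by `4ⁿ` sets of diameter `3⁻ⁿ`.
Lower bound: reading the ternary `0/2` digits of a point of `C` as binary digits (the Cantor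
function) is Hölder of exponent `log 2 / log 3` on `C` and maps `C` onto `[0, 1]`. Its square maps
`C × C` onto the unit square, so `2 ≤ dimH (C × C) / (log 2 / log 3)`.
-/

open Set Filter Topology MeasureTheory Metric Real
open scoped ENNReal NNReal

section Covering

variable {X : Type*} [EMetricSpace X] {ι : ℕ → Type*} [∀ n, Fintype (ι n)] {s : Set X} {N : ℕ}
  {r : ℝ}

theorem hausdorffMeasure_eq_zero_of_forall_cover [MeasurableSpace X] [BorelSpace X] {d : ℝ}
    (hr₀ : 0 < r) (hr₁ : r < 1) (hd : 0 ≤ d) (hNd : N * r ^ d < 1) (t : ∀ n, ι n → Set X)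
    (hcard : ∀ n, Fintype.card (ι n) ≤ N ^ n)
    (hs : ∀ n, s ⊆ ⋃ i, t n i) (ht : ∀ n i, ediam (t n i) ≤ ENNReal.ofReal (r ^ n)) :
    μH[d] s = 0 := by
  have hsum : ∀ n, ∑ i, ediam (t n i) ^ d ≤ ENNReal.ofReal ((N * r ^ d) ^ n) := fun n =>
    calc ∑ i, ediam (t n i) ^ d
        ≤ ∑ _i : ι n, ENNReal.ofReal (r ^ n) ^ d :=
          Finset.sum_le_sum fun i _ => ENNReal.rpow_le_rpow (ht n i) hd
      _ ≤ (N ^ n : ℕ) * ENNReal.ofReal ((r ^ d) ^ n) := by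
          rw [Finset.sum_const, Finset.card_univ, nsmul_eq_mul,
            ENNReal.ofReal_rpow_of_nonneg (by positivity) hd, ← Real.rpow_pow_comm hr₀.le]
          gcongr
          exact_mod_cast hcard n
      _ = ENNReal.ofReal ((N * r ^ d) ^ n) := by
          rw [← ENNReal.ofReal_natCast, ← ENNReal.ofReal_mul (by positivity), mul_pow]
          push_cast
          rfl
  have hlim : Tendsto (fun n : ℕ => ENNReal.ofReal ((N * r ^ d) ^ n)) atTop (𝓝 0) := by
    simpa using ENNReal.tendsto_ofReal
      (tendsto_pow_atTop_nhds_zero_of_lt_one (by positivity) hNd)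
  have hdiam : Tendsto (fun n : ℕ => ENNReal.ofReal (r ^ n)) atTop (𝓝 0) := by
    simpa using ENNReal.tendsto_ofReal (tendsto_pow_atTop_nhds_zero_of_lt_one hr₀.le hr₁)
  refine le_antisymm ?_ bot_le
  calc μH[d] s ≤ liminf (fun n => ∑ i, ediam (t n i) ^ d) atTop :=
        Measure.hausdorffMeasure_le_liminf_sum d s _ hdiam t (.of_forall (ht ·))
          (.of_forall hs)
    _ ≤ liminf (fun n : ℕ => ENNReal.ofReal ((N * r ^ d) ^ n)) atTop :=
        liminf_le_liminf (.of_forall hsum)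
    _ = 0 := hlim.liminf_eq

theorem dimH_le_of_forall_cover (hr₀ : 0 < r) (hr₁ : r < 1) (t : ∀ n, ι n → Set X)
    (hcard : ∀ n, Fintype.card (ι n) ≤ N ^ n) (hs : ∀ n, s ⊆ ⋃ i, t n i)
    (ht : ∀ n i, ediam (t n i) ≤ ENNReal.ofReal (r ^ n)) :
    dimH s ≤ ENNReal.ofReal (Real.log N / Real.log r⁻¹) := by
  borelize X
  refine dimH_le fun d hd => le_of_not_gt fun hlt => ?_
  have hlog : Real.log N < d * Real.log r⁻¹ := by
    rw [← div_lt_iff₀ (Real.log_pos (one_lt_inv_iff₀.2 ⟨hr₀, hr₁⟩))]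
    rw [← ENNReal.ofReal_coe_nnreal] at hlt
    exact (ENNReal.ofReal_lt_ofReal_iff'.1 hlt).1
  have hNd : (N : ℝ) * r ^ (d : ℝ) < 1 := by
    rcases N.eq_zero_or_pos with rfl | hN
    · simp
    rw [← Real.lt_rpow_iff_log_lt (by positivity) (inv_pos.2 hr₀), Real.inv_rpow hr₀.le] at hlog
    have := Real.rpow_pos_of_pos hr₀ d
    calc (N : ℝ) * r ^ (d : ℝ) < (r ^ (d : ℝ))⁻¹ * r ^ (d : ℝ) := by gcongr
      _ = 1 := inv_mul_cancel₀ this.ne'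
  exact ENNReal.zero_ne_top <|
    (hausdorffMeasure_eq_zero_of_forall_cover hr₀ hr₁ d.2 hNd t hcard hs ht).symm.trans hd

end Covering

theorem Metric.ediam_prod_le {X Y : Type*} [PseudoEMetricSpace X] [PseudoEMetricSpace Y]
    (s : Set X) (t : Set Y) : ediam (s ×ˢ t) ≤ max (ediam s) (ediam t) := by
  rw [ediam_le_iff]
  rintro p ⟨hp₁, hp₂⟩ q ⟨hq₁, hq₂⟩
  rw [Prod.edist_eq]
  exact max_le_max (edist_le_ediam_of_mem hp₁ hq₁) (edist_le_ediam_of_mem hp₂ hq₂)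

theorem HolderOnWith.of_dist_le {X Y : Type*} [PseudoMetricSpace X] [PseudoMetricSpace Y]
    {C r : ℝ≥0} {f : X → Y} {s : Set X}
    (h : ∀ x ∈ s, ∀ y ∈ s, dist (f x) (f y) ≤ C * dist x y ^ (r : ℝ)) :
    HolderOnWith C r f s := by
  intro x hx y hy
  rw [edist_dist, edist_dist, ENNReal.ofReal_rpow_of_nonneg dist_nonneg r.coe_nonneg,
    ← ENNReal.ofReal_coe_nnreal, ← ENNReal.ofReal_mul C.coe_nonneg]
  exact ENNReal.ofReal_le_ofReal (h x hx y hy)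

theorem HolderOnWith.prodMap {X Y X' Y' : Type*} [PseudoEMetricSpace X] [PseudoEMetricSpace Y]
    [PseudoEMetricSpace X'] [PseudoEMetricSpace Y'] {C r : ℝ≥0} {f : X → Y} {g : X' → Y'}
    {s : Set X} {t : Set X'} (hf : HolderOnWith C r f s) (hg : HolderOnWith C r g t) :
    HolderOnWith C r (Prod.map f g) (s ×ˢ t) := by
  rintro ⟨x, x'⟩ ⟨hx, hx'⟩ ⟨y, y'⟩ ⟨hy, hy'⟩
  simp only [Prod.edist_eq, Prod.map_apply]
  refine max_le ((hf.edist_le hx hy).trans ?_) ((hg.edist_le hx' hy').trans ?_) <;> gcongr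
  exacts [le_max_left _ _, le_max_right _ _]

section CantorDigits

noncomputable def ternaryOfBool (b : ℕ → Bool) : ℝ := ofDigits fun i => cond (b i) (2 : Fin 3) 0

noncomputable def binaryOfBool (b : ℕ → Bool) : ℝ := ofDigits fun i => cond (b i) (1 : Fin 2) 0

theorem ternaryOfBool_mem_cantorSet (b : ℕ → Bool) : ternaryOfBool b ∈ cantorSet :=
  ofDigits_bool_to_fin_three_mem_cantorSet b

theorem ternaryOfBool_cantorToBinary {x : ℝ} (hx : x ∈ cantorSet) :
    ternaryOfBool (cantorToBinary x).get = x :=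
  congrArg Subtype.val (cantorSetEquivNatToBool.symm_apply_apply ⟨x, hx⟩)

theorem cantorToBinary_ternaryOfBool (b : ℕ → Bool) :
    (cantorToBinary (ternaryOfBool b)).get = b :=
  cantorSetEquivNatToBool.apply_symm_apply b

variable {b c : ℕ → Bool} {n : ℕ}

theorem abs_ternaryOfBool_sub_le (h : ∀ i < n, b i = c i) :
    |ternaryOfBool b - ternaryOfBool c| ≤ (3 ^ n)⁻¹ := by
  simpa [ternaryOfBool] using abs_ofDigits_sub_ofDigits_le (b := 3) fun i hi => by rw [h i hi]

theorem abs_binaryOfBool_sub_le (h : ∀ i < n, b i = c i) :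
    |binaryOfBool b - binaryOfBool c| ≤ (2 ^ n)⁻¹ := by
  simpa [binaryOfBool] using abs_ofDigits_sub_ofDigits_le (b := 2) fun i hi => by rw [h i hi]

theorem inv_pow_succ_le_abs_ternaryOfBool_sub (h : ∀ i < n, b i = c i) (hn : b n ≠ c n) :
    (3 ^ (n + 1))⁻¹ ≤ |ternaryOfBool b - ternaryOfBool c| := by
  set db : ℕ → Fin 3 := fun i => cond (b i) 2 0
  set dc : ℕ → Fin 3 := fun i => cond (c i) 2 0
  set q : ℝ := (3 ^ (n + 1))⁻¹
  have hq : 0 < q := by positivity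
  have hprefix :
      ∑ i ∈ Finset.range n, ofDigitsTerm db i = ∑ i ∈ Finset.range n, ofDigitsTerm dc i :=
    Finset.sum_congr rfl fun i hi => by simp [db, dc, ofDigitsTerm, h i (Finset.mem_range.1 hi)]
  have hdigit : |ofDigitsTerm db n - ofDigitsTerm dc n| = 2 * q := by
    cases hb : b n <;> cases hc : c n <;> simp_all [ofDigitsTerm, db, dc, q, abs_of_pos]
  set u := ofDigits fun i => db (i + (n + 1))
  set v := ofDigits fun i => dc (i + (n + 1))
  have htail : |q * u - q * v| ≤ q := by
    rw [← mul_sub, abs_mul, abs_of_pos hq]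
    refine mul_le_of_le_one_right hq.le ?_
    simpa using abs_sub_le_of_le_of_le (ofDigits_nonneg _) (ofDigits_le_one _)
      (ofDigits_nonneg _) (ofDigits_le_one _)
  have hsplit : ternaryOfBool b - ternaryOfBool c =
      (ofDigitsTerm db n - ofDigitsTerm dc n) + (q * u - q * v) := by
    rw [ternaryOfBool, ternaryOfBool, ofDigits_eq_sum_add_ofDigits db (n + 1),
      ofDigits_eq_sum_add_ofDigits dc (n + 1), Finset.sum_range_succ, Finset.sum_range_succ,
      hprefix, Nat.cast_ofNat]
    ring
  rw [hsplit]
  linarith [abs_sub_abs_le_abs_add (ofDigitsTerm db n - ofDigitsTerm dc n) (q * u - q * v)]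

end CantorDigits

theorem abs_binaryOfBool_sub_le_rpow (b c : ℕ → Bool) :
    |binaryOfBool b - binaryOfBool c| ≤ 2 * |ternaryOfBool b - ternaryOfBool c| ^ logb 3 2 := by
  rcases eq_or_ne b c with rfl | hne
  · simp only [sub_self, abs_zero]
    positivity
  obtain ⟨n, hn, h⟩ : ∃ n, b n ≠ c n ∧ ∀ i < n, b i = c i := by
    have hex := Function.ne_iff.1 hne
    exact ⟨Nat.find hex, Nat.find_spec hex, fun i hi => not_not.1 (Nat.find_min hex hi)⟩
  have hscale : ((3 : ℝ) ^ (n + 1))⁻¹ ^ logb 3 2 = ((2 : ℝ) ^ (n + 1))⁻¹ := by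
    rw [Real.inv_rpow (by positivity), ← Real.rpow_pow_comm (by norm_num),
      Real.rpow_logb (by norm_num) (by norm_num) (by norm_num)]
  calc |binaryOfBool b - binaryOfBool c| ≤ (2 ^ n)⁻¹ := abs_binaryOfBool_sub_le h
    _ = 2 * ((3 : ℝ) ^ (n + 1))⁻¹ ^ logb 3 2 := by rw [hscale, pow_succ]; field_simp
    _ ≤ 2 * |ternaryOfBool b - ternaryOfBool c| ^ logb 3 2 := by
      gcongr
      exacts [(logb_pos (by norm_num) one_lt_two).le, inv_pow_succ_le_abs_ternaryOfBool_sub h hn]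

-- On `cantorSet` this is the Cantor staircase; off it the value is meaningless.
noncomputable def cantorFunction (x : ℝ) : ℝ := binaryOfBool (cantorToBinary x).get

theorem holderOnWith_cantorFunction :
    HolderOnWith 2 ⟨logb 3 2, (logb_pos (by norm_num) one_lt_two).le⟩ cantorFunction cantorSet :=
  .of_dist_le fun x hx y hy => by
    have h := abs_binaryOfBool_sub_le_rpow (cantorToBinary x).get (cantorToBinary y).get
    rwa [ternaryOfBool_cantorToBinary hx, ternaryOfBool_cantorToBinary hy, ← Real.dist_eq,
      ← Real.dist_eq] at h

theorem Icc_subset_image_cantorFunction : Icc 0 1 ⊆ cantorFunction '' cantorSet := by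
  intro y hy
  obtain ⟨d, -, rfl⟩ := ofDigits_SurjOn one_lt_two hy
  refine ⟨ternaryOfBool fun i => d i = 1, ternaryOfBool_mem_cantorSet _, ?_⟩
  rw [cantorFunction, cantorToBinary_ternaryOfBool, binaryOfBool]
  congr 1
  funext i
  generalize d i = k
  fin_cases k <;> rfl

theorem dimH_Icc_prod_Icc : dimH (Icc (0 : ℝ) 1 ×ˢ Icc (0 : ℝ) 1) = 2 := by
  rw [Real.dimH_of_nonempty_interior, Module.finrank_prod, Module.finrank_self]
  · norm_num
  · rw [interior_prod_eq, interior_Icc]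
    exact ⟨(2⁻¹, 2⁻¹), by norm_num, by norm_num⟩

def cantorCylinder {n : ℕ} (u : Fin n → Bool) : Set ℝ :=
  ternaryOfBool '' {b | ∀ i : Fin n, b i = u i}

theorem ediam_cantorCylinder_le {n : ℕ} (u : Fin n → Bool) :
    ediam (cantorCylinder u) ≤ ENNReal.ofReal (3⁻¹ ^ n) := by
  rw [ediam_le_iff]
  rintro _ ⟨b, hb, rfl⟩ _ ⟨c, hc, rfl⟩
  rw [edist_dist, Real.dist_eq, inv_pow]
  exact ENNReal.ofReal_le_ofReal
    (abs_ternaryOfBool_sub_le fun i hi => (hb ⟨i, hi⟩).trans (hc ⟨i, hi⟩).symm)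

theorem cantorSet_subset_iUnion_cantorCylinder (n : ℕ) :
    cantorSet ⊆ ⋃ u : Fin n → Bool, cantorCylinder u := fun x hx =>
  mem_iUnion.2
    ⟨fun i => (cantorToBinary x).get i, _, fun _ => rfl, ternaryOfBool_cantorToBinary hx⟩

theorem dimH_cantorSet_prod_le : dimH (cantorSet ×ˢ cantorSet) ≤ ENNReal.ofReal (logb 3 4) := by
  have h := dimH_le_of_forall_cover (s := cantorSet ×ˢ cantorSet) (N := 4) (r := 3⁻¹)
    (by norm_num) (by norm_num)
    (fun n (u : (Fin n → Bool) × (Fin n → Bool)) => cantorCylinder u.1 ×ˢ cantorCylinder u.2)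
    (fun n => by simp [← mul_pow])
    (fun n => by
      rw [iUnion_prod]
      exact prod_mono (cantorSet_subset_iUnion_cantorCylinder n)
        (cantorSet_subset_iUnion_cantorCylinder n))
    (fun n u => (ediam_prod_le _ _).trans
      (max_le (ediam_cantorCylinder_le u.1) (ediam_cantorCylinder_le u.2)))
  rwa [inv_inv, Real.log_div_log, Nat.cast_ofNat] at h

theorem le_dimH_cantorSet_prod : ENNReal.ofReal (logb 3 4) ≤ dimH (cantorSet ×ˢ cantorSet) := by
  have hα : (0 : ℝ≥0) < ⟨logb 3 2, (logb_pos (by norm_num) one_lt_two).le⟩ :=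
    logb_pos (by norm_num) one_lt_two
  have hg := holderOnWith_cantorFunction.prodMap holderOnWith_cantorFunction
  have hsq : 2 ≤ dimH (Prod.map cantorFunction cantorFunction '' cantorSet ×ˢ cantorSet) := by
    rw [prodMap_image_prod, ← dimH_Icc_prod_Icc]
    exact dimH_mono (prod_mono Icc_subset_image_cantorFunction Icc_subset_image_cantorFunction)
  have h := (ENNReal.le_div_iff_mul_le (Or.inl (ENNReal.coe_ne_zero.2 hα.ne'))
    (Or.inl ENNReal.coe_ne_top)).1 (hsq.trans (hg.dimH_image_le hα))
  rwa [show (4 : ℝ) = 2 ^ 2 by norm_num, logb_pow, ENNReal.ofReal_mul (by norm_num),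
    ENNReal.ofReal_eq_coe_nnreal hα.le, Nat.cast_ofNat, ENNReal.ofReal_ofNat]

theorem exists_eq_mul_add_of_mem_cantorSet {x : ℝ} (hx : x ∈ cantorSet) :
    ∃ y ∈ cantorSet, ∃ e ∈ ({0, 2 / 3} : Set ℝ), x = 3⁻¹ * y + e := by
  rw [cantorSet_eq_union_halves] at hx
  rcases hx with ⟨y, hy, rfl⟩ | ⟨y, hy, rfl⟩
  exacts [⟨y, hy, 0, by simp, by ring⟩, ⟨y, hy, 2 / 3, by simp, by ring⟩]

theorem mul_add_mem_preCantorSet {x e : ℝ} {n : ℕ} (hx : x ∈ preCantorSet n)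
    (he : e ∈ ({0, 2 / 3} : Set ℝ)) : 3⁻¹ * x + e ∈ preCantorSet (n + 1) := by
  rcases he with rfl | rfl
  exacts [Or.inl ⟨x, hx, by ring⟩, Or.inr ⟨x, hx, by ring⟩]

theorem biUnion_smul_add_image_eq (s : Set (ℝ × ℝ)) :
    ⋃ e ∈ ({0, 2 / 3} : Set ℝ) ×ˢ ({0, 2 / 3} : Set ℝ), (fun p => (3 : ℝ)⁻¹ • p + e) '' s =
      (fun p : ℝ × ℝ => (p.1 / 3, p.2 / 3)) '' s ∪
      (fun p : ℝ × ℝ => (p.1 / 3, p.2 / 3 + 2/3)) '' s ∪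
      (fun p : ℝ × ℝ => (p.1 / 3 + 2/3, p.2 / 3)) '' s ∪
      (fun p : ℝ × ℝ => (p.1 / 3 + 2/3, p.2 / 3 + 2/3)) '' s := by
  simp only [insert_prod, singleton_prod, biUnion_union, image_insert_eq, image_singleton,
    biUnion_insert, biUnion_singleton, union_assoc, Prod.smul_def, Prod.mk_add_mk, smul_eq_mul,
    add_zero, inv_mul_eq_div]

theorem exists_eq_smul_add_of_mem_cantorSet_prod {p : ℝ × ℝ}
    (hp : p ∈ cantorSet ×ˢ cantorSet) :
    ∃ q ∈ cantorSet ×ˢ cantorSet, ∃ e ∈ ({0, 2 / 3} : Set ℝ) ×ˢ ({0, 2 / 3} : Set ℝ),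
      p = (3 : ℝ)⁻¹ • q + e := by
  obtain ⟨x, hx, e₁, he₁, h₁⟩ := exists_eq_mul_add_of_mem_cantorSet hp.1
  obtain ⟨y, hy, e₂, he₂, h₂⟩ := exists_eq_mul_add_of_mem_cantorSet hp.2
  exact ⟨(x, y), ⟨hx, hy⟩, (e₁, e₂), ⟨he₁, he₂⟩, Prod.ext h₁ h₂⟩

section SelfSimilar

variable {K : Set (ℝ × ℝ)}
  (hK : K = ⋃ e ∈ ({0, 2 / 3} : Set ℝ) ×ˢ ({0, 2 / 3} : Set ℝ),
    (fun p => (3 : ℝ)⁻¹ • p + e) '' K)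
  (hK₀₁ : K ⊆ Icc 0 1 ×ˢ Icc 0 1)
include hK hK₀₁

theorem subset_cantorSet_prod : K ⊆ cantorSet ×ˢ cantorSet := by
  have h : ∀ n, K ⊆ preCantorSet n ×ˢ preCantorSet n := by
    intro n
    induction n with
    | zero => exact hK₀₁
    | succ n ih =>
      intro p hp
      rw [hK] at hp
      obtain ⟨e, ⟨he₁, he₂⟩, q, hq, rfl⟩ := by
        simpa only [mem_iUnion₂, mem_image] using hp
      exact ⟨mul_add_mem_preCantorSet (ih hq).1 he₁, mul_add_mem_preCantorSet (ih hq).2 he₂⟩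
  exact fun p hp => ⟨mem_iInter.2 fun n => (h n hp).1, mem_iInter.2 fun n => (h n hp).2⟩

theorem exists_mem_dist_le_of_mem_cantorSet_prod (hne : K.Nonempty) (n : ℕ) {p : ℝ × ℝ}
    (hp : p ∈ cantorSet ×ˢ cantorSet) : ∃ q ∈ K, dist p q ≤ 3⁻¹ ^ n := by
  induction n generalizing p with
  | zero =>
    obtain ⟨q, hq⟩ := hne
    have hp₀₁ := prod_mono cantorSet_subset_unitInterval cantorSet_subset_unitInterval hp
    refine ⟨q, hq, ?_⟩
    rw [pow_zero, Prod.dist_eq]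
    exact max_le (Real.dist_le_of_mem_Icc_01 hp₀₁.1 (hK₀₁ hq).1)
      (Real.dist_le_of_mem_Icc_01 hp₀₁.2 (hK₀₁ hq).2)
  | succ n ih =>
    obtain ⟨p', hp', e, he, rfl⟩ := exists_eq_smul_add_of_mem_cantorSet_prod hp
    obtain ⟨q, hq, hpq⟩ := ih hp'
    refine ⟨(3 : ℝ)⁻¹ • q + e, ?_, ?_⟩
    · rw [hK]
      exact mem_iUnion₂.2 ⟨e, he, q, hq, rfl⟩
    · rw [dist_add_right, dist_smul₀, pow_succ', norm_inv, Real.norm_ofNat]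
      gcongr

theorem cantorSet_prod_subset (hne : K.Nonempty) (hcl : IsClosed K) :
    cantorSet ×ˢ cantorSet ⊆ K := fun p hp => by
  rw [← hcl.closure_eq, Metric.mem_closure_iff]
  intro ε hε
  obtain ⟨n, hn⟩ := exists_pow_lt_of_lt_one hε (by norm_num : (3 : ℝ)⁻¹ < 1)
  obtain ⟨q, hq, hpq⟩ := exists_mem_dist_le_of_mem_cantorSet_prod hK hK₀₁ hne n hp
  exact ⟨q, hq, hpq.trans_lt hn⟩

theorem eq_cantorSet_prod (hne : K.Nonempty) (hcl : IsClosed K) : K = cantorSet ×ˢ cantorSet :=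
  (subset_cantorSet_prod hK hK₀₁).antisymm (cantorSet_prod_subset hK hK₀₁ hne hcl)

end SelfSimilar

/-- The Hausdorff dimension of the Cantor dust is `log 4 / log 3`. -/
theorem stmt6 (CD : Set (ℝ × ℝ))
    (hCDsub : CD ⊆ Set.Icc (0, 0) (1, 1))
    (hCDne : CD.Nonempty) (hCDcomp : IsCompact CD)
    (hCDinv : CD =
      (fun p : ℝ × ℝ => (p.1 / 3, p.2 / 3)) '' CD ∪
      (fun p : ℝ × ℝ => (p.1 / 3, p.2 / 3 + 2/3)) '' CD ∪
      (fun p : ℝ × ℝ => (p.1 / 3 + 2/3, p.2 / 3)) '' CD ∪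
      (fun p : ℝ × ℝ => (p.1 / 3 + 2/3, p.2 / 3 + 2/3)) '' CD) :
    dimH CD = ENNReal.ofReal (Real.log 4 / Real.log 3) := by
  rw [← biUnion_smul_add_image_eq] at hCDinv
  rw [← Icc_prod_Icc] at hCDsub
  rw [eq_cantorSet_prod hCDinv hCDsub hCDne hCDcomp.isClosed, Real.log_div_log]
  exact dimH_cantorSet_prod_le.antisymm le_dimH_cantorSet_prod
end

section
/- For smooth functions f̃, g̃, h̃ on the torus 𝕋² = [0,1]²/∼, the Riemann-type sums (1/2)·Σ_{□ ∈ ⊞_n} [f̃(0)(g̃_{0,1}h̃_{1,2} − g̃_{0,3}h̃_{3,2}) + f̃(2)(g̃_{2,3}h̃_{3,0} − g̃_{2,1}h̃_{1,0}) − f̃(1)(g̃_{1,0}h̃_{0,3} − g̃_{1,2}h̃_{2,3}) − f̃(3)(g̃_{3,2}h̃_{2,1} − g̃_{3,0}h̃_{0,1})] over the 2ⁿ-fold dyadic subdivision ⊞_n of [0,1]² converge, as n → ∞, to 2·∫_{𝕋²} f̃ (g̃_x h̃_y − g̃_y h̃_x) dx dy. -/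
open Filter

open Filter Topology MeasureTheory intervalIntegral Set

lemma abs_sub_le' (a b : ℝ) : |a - b| ≤ |a| + |b| := by
  rw [sub_eq_add_neg]
  exact (abs_add_le _ _).trans (by rw [abs_neg])

lemma prod_est {X x Y y e L : ℝ} (he : 0 ≤ e) (hL : 0 ≤ L)
    (h1 : |X - x| ≤ e) (h2 : |Y - y| ≤ e) (hY : |Y| ≤ L) (hx : |x| ≤ L) :
    |X*Y - x*y| ≤ 2*e*L := by
  have key : X*Y - x*y = (X - x)*Y + x*(Y - y) := by ring
  calc |X*Y - x*y| = |(X - x)*Y + x*(Y - y)| := by rw [key]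
    _ ≤ |X - x| * |Y| + |x| * |Y - y| := (abs_add_le _ _).trans (by rw [abs_mul, abs_mul])
    _ ≤ e*L + L*e := add_le_add
        (mul_le_mul h1 hY (abs_nonneg _) he)
        (mul_le_mul hx h2 (abs_nonneg _) hL)
    _ = 2*e*L := by ring

lemma lip_est {φ : ℝ × ℝ → ℝ} (hφ : ContDiff ℝ (⊤ : ℕ∞) φ) {s : Set (ℝ × ℝ)} (hs : Convex ℝ s)
    {M : ℝ} (hM : ∀ x ∈ s, ‖fderiv ℝ φ x‖ ≤ M) {p q : ℝ × ℝ} (hp : p ∈ s) (hq : q ∈ s) :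
    ‖φ q - φ p‖ ≤ M * ‖q - p‖ :=
  hs.norm_image_sub_le_of_norm_fderiv_le
    (fun x _ => (hφ.differentiable (by simp)).differentiableAt) hM hp hq

lemma taylor_est {φ : ℝ × ℝ → ℝ} (hφ : ContDiff ℝ (⊤ : ℕ∞) φ) {s : Set (ℝ × ℝ)} (hs : Convex ℝ s)
    {ε : ℝ} {p q : ℝ × ℝ} (hmod : ∀ x ∈ s, ‖fderiv ℝ φ x - fderiv ℝ φ p‖ ≤ ε)
    (hp : p ∈ s) (hq : q ∈ s) :
    ‖φ q - φ p - fderiv ℝ φ p (q - p)‖ ≤ ε * ‖q - p‖ := by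
  have hdiff : ∀ x ∈ s, DifferentiableAt ℝ (fun x => φ x - fderiv ℝ φ p x) x :=
    fun x _ => ((hφ.differentiable (by simp)).differentiableAt).sub
      (fderiv ℝ φ p).differentiableAt
  have hbound : ∀ x ∈ s, ‖fderiv ℝ (fun x => φ x - fderiv ℝ φ p x) x‖ ≤ ε := by
    intro x hx
    rw [fderiv_fun_sub ((hφ.differentiable (by simp)).differentiableAt)
      (fderiv ℝ φ p).differentiableAt, (fderiv ℝ φ p).fderiv]
    exact hmod x hx
  have := hs.norm_image_sub_le_of_norm_fderiv_le hdiff hbound hp hq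
  calc ‖φ q - φ p - fderiv ℝ φ p (q - p)‖
      = ‖(φ q - fderiv ℝ φ p q) - (φ p - fderiv ℝ φ p p)‖ := by
        rw [map_sub]; ring_nf
    _ ≤ ε * ‖q - p‖ := this

lemma ball_sub_K {u : ℝ × ℝ} (hu : u ∈ Set.Icc ((0:ℝ),(0:ℝ)) (1,1)) {δ : ℝ} (hδ1 : δ ≤ 1)
    {x : ℝ × ℝ} (hx : x ∈ Metric.closedBall u δ) :
    x ∈ Set.Icc ((-1:ℝ),(-1:ℝ)) (2,2) := by
  obtain ⟨⟨h1, h2⟩, ⟨h3, h4⟩⟩ := hu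
  simp only [Prod.le_def] at h1 h2 h3 h4 ⊢
  rw [Metric.mem_closedBall, Prod.dist_eq, Real.dist_eq, Real.dist_eq, max_le_iff] at hx
  obtain ⟨hx1, hx2⟩ := hx
  rw [abs_le] at hx1 hx2
  constructor <;> constructor <;> simp <;> linarith [h1, h2, h3, h4, hx1.1, hx1.2, hx2.1, hx2.2]

lemma diff_est {φ : ℝ × ℝ → ℝ} (hφ : ContDiff ℝ (⊤ : ℕ∞) φ) {r ε δ : ℝ} (hε : 0 ≤ ε)
    (hmod : ∀ x ∈ Set.Icc ((-1:ℝ),(-1:ℝ)) (2,2), ∀ y ∈ Set.Icc ((-1:ℝ),(-1:ℝ)) (2,2),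
      dist x y < r → ‖fderiv ℝ φ x - fderiv ℝ φ y‖ ≤ ε)
    (hδpos : 0 < δ) (hδ1 : δ ≤ 1) (hδr : δ < r)
    {u v0 e : ℝ × ℝ} (hu : u ∈ Set.Icc ((0:ℝ),(0:ℝ)) (1,1))
    (hv0 : v0 ∈ Set.Icc ((0:ℝ),(0:ℝ)) (1,1)) (hdist : dist u v0 ≤ δ)
    (he : ‖e‖ ≤ 1) {c : ℝ} (hc : |c| ≤ δ) :
    |φ (u + c • e) - φ u - c * (fderiv ℝ φ v0 e)| ≤ 2 * ε * δ := by
  have hce : ‖c • e‖ ≤ δ := by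
    rw [norm_smul]
    calc ‖c‖ * ‖e‖ ≤ δ * 1 := mul_le_mul hc he (norm_nonneg _) hδpos.le
      _ = δ := by ring
  have huK : u ∈ Set.Icc ((-1:ℝ),(-1:ℝ)) (2,2) :=
    ball_sub_K hu hδ1 (Metric.mem_closedBall_self hδpos.le)
  have hv0K : v0 ∈ Set.Icc ((-1:ℝ),(-1:ℝ)) (2,2) :=
    ball_sub_K hv0 hδ1 (Metric.mem_closedBall_self hδpos.le)
  -- Taylor estimate at u on the closed ball around u
  have hT : ‖φ (u + c • e) - φ u - fderiv ℝ φ u (c • e)‖ ≤ ε * δ := by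
    have hq : u + c • e ∈ Metric.closedBall u δ := by
      rw [Metric.mem_closedBall, dist_eq_norm, add_sub_cancel_left]
      exact hce
    have := taylor_est hφ (convex_closedBall u δ)
      (ε := ε) (p := u) (q := u + c • e) ?_ (Metric.mem_closedBall_self hδpos.le) hq
    · rw [add_sub_cancel_left] at this
      exact this.trans (mul_le_mul_of_nonneg_left hce hε)
    · intro x hx
      exact hmod x (ball_sub_K hu hδ1 hx) u huK
        (lt_of_le_of_lt (Metric.mem_closedBall.mp hx) hδr)
  -- compare derivative at u with derivative at v0
  have hD : |fderiv ℝ φ u e - fderiv ℝ φ v0 e| ≤ ε := by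
    have h1 : fderiv ℝ φ u e - fderiv ℝ φ v0 e = (fderiv ℝ φ u - fderiv ℝ φ v0) e := by
      simp
    rw [h1]
    calc |(fderiv ℝ φ u - fderiv ℝ φ v0) e|
        ≤ ‖fderiv ℝ φ u - fderiv ℝ φ v0‖ * ‖e‖ := (fderiv ℝ φ u - fderiv ℝ φ v0).le_opNorm e
      _ ≤ ε * 1 := mul_le_mul (hmod u huK v0 hv0K (lt_of_le_of_lt hdist hδr)) he
          (norm_nonneg _) hε
      _ = ε := by ring
  have hfs : fderiv ℝ φ u (c • e) = c * fderiv ℝ φ u e := by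
    rw [_root_.map_smul, smul_eq_mul]
  calc |φ (u + c • e) - φ u - c * (fderiv ℝ φ v0 e)|
      = |(φ (u + c • e) - φ u - fderiv ℝ φ u (c • e))
          + c * (fderiv ℝ φ u e - fderiv ℝ φ v0 e)| := by rw [hfs]; ring_nf
    _ ≤ |φ (u + c • e) - φ u - fderiv ℝ φ u (c • e)|
          + |c| * |fderiv ℝ φ u e - fderiv ℝ φ v0 e| := (abs_add_le _ _).trans (by rw [abs_mul])
    _ ≤ ε * δ + δ * ε := add_le_add hT (mul_le_mul hc hD (abs_nonneg _) hδpos.le)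
    _ = 2 * ε * δ := by ring

set_option maxHeartbeats 1000000 in
lemma sq_est {M ε δ f0 f1 f2 f3 Gx Gy Hx Hy A B C D P Q R S : ℝ}
    (hM : 1 ≤ M) (hε : 0 ≤ ε) (hεM : ε ≤ M) (hδ : 0 ≤ δ)
    (hf0 : |f0| ≤ M) (hf1 : |f1 - f0| ≤ ε) (hf2 : |f2 - f0| ≤ ε) (hf3 : |f3 - f0| ≤ ε)
    (hGx : |Gx| ≤ M) (hGy : |Gy| ≤ M) (hHx : |Hx| ≤ M) (hHy : |Hy| ≤ M)
    (hA : |A - δ*Gx| ≤ ε*δ) (hB : |B - δ*Gy| ≤ ε*δ)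
    (hC : |C + δ*Gx| ≤ ε*δ) (hD : |D + δ*Gy| ≤ ε*δ)
    (hP : |P - δ*Hy| ≤ ε*δ) (hQ : |Q - δ*Hx| ≤ ε*δ)
    (hR : |R + δ*Hy| ≤ ε*δ) (hS : |S + δ*Hx| ≤ ε*δ) :
    |f0*(A*P - B*Q) + f2*(C*R - D*S) - f1*(A*R - D*Q) - f3*(C*P - B*S)
      - 4*δ^2*f0*(Gx*Hy - Gy*Hx)| ≤ 100*M^2*ε*δ^2 := by
  have hMpos : (0:ℝ) < M := lt_of_lt_of_le one_pos hM
  have hLb : ∀ x g : ℝ, |g| ≤ M → |x - δ*g| ≤ ε*δ → |x| ≤ 2*M*δ := by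
    intro x g hg hx
    calc |x| = |(x - δ*g) + δ*g| := by ring_nf
      _ ≤ |x - δ*g| + |δ| * |g| := (abs_add_le _ _).trans (by rw [abs_mul])
      _ ≤ ε*δ + δ*M := add_le_add hx (by
          rw [abs_of_nonneg hδ]
          exact mul_le_mul_of_nonneg_left hg hδ)
      _ ≤ 2*M*δ := by nlinarith
  have hLb' : ∀ x g : ℝ, |g| ≤ M → |x + δ*g| ≤ ε*δ → |x| ≤ 2*M*δ := by
    intro x g hg hx
    have : |x - δ*(-g)| ≤ ε*δ := by rw [mul_neg]; convert hx using 2; ring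
    exact hLb x (-g) (by rwa [abs_neg]) this
  have habsA : |A| ≤ 2*M*δ := hLb A Gx hGx hA
  have habsB : |B| ≤ 2*M*δ := hLb B Gy hGy hB
  have habsC : |C| ≤ 2*M*δ := hLb' C Gx hGx hC
  have habsD : |D| ≤ 2*M*δ := hLb' D Gy hGy hD
  have habsP : |P| ≤ 2*M*δ := hLb P Hy hHy hP
  have habsQ : |Q| ≤ 2*M*δ := hLb Q Hx hHx hQ
  have habsR : |R| ≤ 2*M*δ := hLb' R Hy hHy hR
  have habsS : |S| ≤ 2*M*δ := hLb' S Hx hHx hS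
  have hδG : ∀ g : ℝ, |g| ≤ M → |δ*g| ≤ 2*M*δ := by
    intro g hg
    rw [abs_mul, abs_of_nonneg hδ]
    nlinarith
  -- the eight product estimates
  have e1 : |A*P - (δ*Gx)*(δ*Hy)| ≤ 2*(ε*δ)*(2*M*δ) :=
    prod_est (by positivity) (by positivity) hA hP habsP (hδG Gx hGx)
  have e2 : |B*Q - (δ*Gy)*(δ*Hx)| ≤ 2*(ε*δ)*(2*M*δ) :=
    prod_est (by positivity) (by positivity) hB hQ habsQ (hδG Gy hGy)
  have e3 : |C*R - (-(δ*Gx))*(-(δ*Hy))| ≤ 2*(ε*δ)*(2*M*δ) := by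
    refine prod_est (by positivity) (by positivity) ?_ ?_ habsR ?_
    · rw [sub_neg_eq_add]; exact hC
    · rw [sub_neg_eq_add]; exact hR
    · rw [abs_neg]; exact hδG Gx hGx
  have e4 : |D*S - (-(δ*Gy))*(-(δ*Hx))| ≤ 2*(ε*δ)*(2*M*δ) := by
    refine prod_est (by positivity) (by positivity) ?_ ?_ habsS ?_
    · rw [sub_neg_eq_add]; exact hD
    · rw [sub_neg_eq_add]; exact hS
    · rw [abs_neg]; exact hδG Gy hGy
  have e5 : |A*R - (δ*Gx)*(-(δ*Hy))| ≤ 2*(ε*δ)*(2*M*δ) := by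
    refine prod_est (by positivity) (by positivity) hA ?_ habsR (hδG Gx hGx)
    rw [sub_neg_eq_add]; exact hR
  have e6 : |D*Q - (-(δ*Gy))*(δ*Hx)| ≤ 2*(ε*δ)*(2*M*δ) := by
    refine prod_est (by positivity) (by positivity) ?_ hQ habsQ ?_
    · rw [sub_neg_eq_add]; exact hD
    · rw [abs_neg]; exact hδG Gy hGy
  have e7 : |C*P - (-(δ*Gx))*(δ*Hy)| ≤ 2*(ε*δ)*(2*M*δ) := by
    refine prod_est (by positivity) (by positivity) ?_ hP habsP ?_
    · rw [sub_neg_eq_add]; exact hC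
    · rw [abs_neg]; exact hδG Gx hGx
  have e8 : |B*S - (δ*Gy)*(-(δ*Hx))| ≤ 2*(ε*δ)*(2*M*δ) := by
    refine prod_est (by positivity) (by positivity) hB ?_ habsS (hδG Gy hGy)
    rw [sub_neg_eq_add]; exact hS
  -- bounds on the raw products
  have hprod : ∀ x y : ℝ, |x| ≤ 2*M*δ → |y| ≤ 2*M*δ → |x*y| ≤ 4*M^2*δ^2 := by
    intro x y hx hy
    rw [abs_mul]
    calc |x| * |y| ≤ (2*M*δ) * (2*M*δ) :=
        mul_le_mul hx hy (abs_nonneg _) (by positivity)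
      _ = 4*M^2*δ^2 := by ring
  -- group into four terms
  have decomp : f0*(A*P - B*Q) + f2*(C*R - D*S) - f1*(A*R - D*Q) - f3*(C*P - B*S)
      - 4*δ^2*f0*(Gx*Hy - Gy*Hx)
      = f0*((A*P - (δ*Gx)*(δ*Hy)) - (B*Q - (δ*Gy)*(δ*Hx)))
        + (f0*((C*R - (-(δ*Gx))*(-(δ*Hy))) - (D*S - (-(δ*Gy))*(-(δ*Hx))))
            + (f2 - f0)*(C*R - D*S))
        + (-(f0*((A*R - (δ*Gx)*(-(δ*Hy))) - (D*Q - (-(δ*Gy))*(δ*Hx))))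
            - (f1 - f0)*(A*R - D*Q))
        + (-(f0*((C*P - (-(δ*Gx))*(δ*Hy)) - (B*S - (δ*Gy)*(-(δ*Hx)))))
            - (f3 - f0)*(C*P - B*S)) := by ring
  rw [decomp]
  have habs4 : ∀ a b c d : ℝ, |a + b + c + d| ≤ |a| + |b| + |c| + |d| := by
    intro a b c d
    calc |a + b + c + d| ≤ |a + b + c| + |d| := abs_add_le _ _
      _ ≤ (|a + b| + |c|) + |d| := by gcongr; exact abs_add_le _ _
      _ ≤ ((|a| + |b|) + |c|) + |d| := by gcongr; exact abs_add_le _ _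
  refine le_trans (habs4 _ _ _ _) ?_
  have t0 : |f0*((A*P - (δ*Gx)*(δ*Hy)) - (B*Q - (δ*Gy)*(δ*Hx)))| ≤ 8*M^2*ε*δ^2 := by
    rw [abs_mul]
    calc |f0| * |(A*P - (δ*Gx)*(δ*Hy)) - (B*Q - (δ*Gy)*(δ*Hx))|
        ≤ M * (2*(ε*δ)*(2*M*δ) + 2*(ε*δ)*(2*M*δ)) :=
          mul_le_mul hf0 ((abs_sub_le' _ _).trans (add_le_add e1 e2)) (abs_nonneg _) hMpos.le
      _ = 8*M^2*ε*δ^2 := by ring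
  have t2 : |f0*((C*R - (-(δ*Gx))*(-(δ*Hy))) - (D*S - (-(δ*Gy))*(-(δ*Hx))))
      + (f2 - f0)*(C*R - D*S)| ≤ 16*M^2*ε*δ^2 := by
    refine le_trans (abs_add_le _ _) ?_
    have p1 : |f0*((C*R - (-(δ*Gx))*(-(δ*Hy))) - (D*S - (-(δ*Gy))*(-(δ*Hx))))|
        ≤ 8*M^2*ε*δ^2 := by
      rw [abs_mul]
      calc |f0| * _ ≤ M * (2*(ε*δ)*(2*M*δ) + 2*(ε*δ)*(2*M*δ)) :=
            mul_le_mul hf0 ((abs_sub_le' _ _).trans (add_le_add e3 e4)) (abs_nonneg _) hMpos.le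
        _ = 8*M^2*ε*δ^2 := by ring
    have p2 : |(f2 - f0)*(C*R - D*S)| ≤ 8*M^2*ε*δ^2 := by
      rw [abs_mul]
      calc |f2 - f0| * |C*R - D*S| ≤ ε * (4*M^2*δ^2 + 4*M^2*δ^2) :=
          mul_le_mul hf2 ((abs_sub_le' _ _).trans
            (add_le_add (hprod _ _ habsC habsR) (hprod _ _ habsD habsS))) (abs_nonneg _) hε
        _ = 8*M^2*ε*δ^2 := by ring
    linarith
  have t1 : |(-(f0*((A*R - (δ*Gx)*(-(δ*Hy))) - (D*Q - (-(δ*Gy))*(δ*Hx))))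
      - (f1 - f0)*(A*R - D*Q))| ≤ 16*M^2*ε*δ^2 := by
    refine le_trans (abs_sub_le' _ _) ?_
    rw [abs_neg]
    have p1 : |f0*((A*R - (δ*Gx)*(-(δ*Hy))) - (D*Q - (-(δ*Gy))*(δ*Hx)))|
        ≤ 8*M^2*ε*δ^2 := by
      rw [abs_mul]
      calc |f0| * _ ≤ M * (2*(ε*δ)*(2*M*δ) + 2*(ε*δ)*(2*M*δ)) :=
            mul_le_mul hf0 ((abs_sub_le' _ _).trans (add_le_add e5 e6)) (abs_nonneg _) hMpos.le
        _ = 8*M^2*ε*δ^2 := by ring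
    have p2 : |(f1 - f0)*(A*R - D*Q)| ≤ 8*M^2*ε*δ^2 := by
      rw [abs_mul]
      calc |f1 - f0| * |A*R - D*Q| ≤ ε * (4*M^2*δ^2 + 4*M^2*δ^2) :=
          mul_le_mul hf1 ((abs_sub_le' _ _).trans
            (add_le_add (hprod _ _ habsA habsR) (hprod _ _ habsD habsQ))) (abs_nonneg _) hε
        _ = 8*M^2*ε*δ^2 := by ring
    linarith
  have t3 : |(-(f0*((C*P - (-(δ*Gx))*(δ*Hy)) - (B*S - (δ*Gy)*(-(δ*Hx)))))
      - (f3 - f0)*(C*P - B*S))| ≤ 16*M^2*ε*δ^2 := by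
    refine le_trans (abs_sub_le' _ _) ?_
    rw [abs_neg]
    have p1 : |f0*((C*P - (-(δ*Gx))*(δ*Hy)) - (B*S - (δ*Gy)*(-(δ*Hx))))|
        ≤ 8*M^2*ε*δ^2 := by
      rw [abs_mul]
      calc |f0| * _ ≤ M * (2*(ε*δ)*(2*M*δ) + 2*(ε*δ)*(2*M*δ)) :=
            mul_le_mul hf0 ((abs_sub_le' _ _).trans (add_le_add e7 e8)) (abs_nonneg _) hMpos.le
        _ = 8*M^2*ε*δ^2 := by ring
    have p2 : |(f3 - f0)*(C*P - B*S)| ≤ 8*M^2*ε*δ^2 := by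
      rw [abs_mul]
      calc |f3 - f0| * |C*P - B*S| ≤ ε * (4*M^2*δ^2 + 4*M^2*δ^2) :=
          mul_le_mul hf3 ((abs_sub_le' _ _).trans
            (add_le_add (hprod _ _ habsC habsP) (hprod _ _ habsB habsS))) (abs_nonneg _) hε
        _ = 8*M^2*ε*δ^2 := by ring
    linarith
  have hnn : (0:ℝ) ≤ M^2*ε*δ^2 := by positivity
  linarith [t0, t1, t2, t3]

lemma add_smul_e1 (x y c : ℝ) : ((x,y) : ℝ × ℝ) + c • ((1:ℝ),(0:ℝ)) = (x + c, y) := by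
  simp [Prod.ext_iff]

lemma add_smul_e2 (x y c : ℝ) : ((x,y) : ℝ × ℝ) + c • ((0:ℝ),(1:ℝ)) = (x, y + c) := by
  simp [Prod.ext_iff]

lemma norm_e1 : ‖(((1:ℝ),(0:ℝ)) : ℝ × ℝ)‖ ≤ 1 := by
  rw [Prod.norm_def]
  norm_num

lemma norm_e2 : ‖(((0:ℝ),(1:ℝ)) : ℝ × ℝ)‖ ≤ 1 := by
  rw [Prod.norm_def]
  norm_num

lemma mem_sq {x y δ : ℝ} (hx0 : 0 ≤ x) (hy0 : 0 ≤ y) (hδ : 0 ≤ δ)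
    (hx1 : x + δ ≤ 1) (hy1 : y + δ ≤ 1) {a b : ℝ} (ha : a = x ∨ a = x + δ)
    (hb : b = y ∨ b = y + δ) : ((a,b) : ℝ × ℝ) ∈ Set.Icc ((0:ℝ),(0:ℝ)) (1,1) := by
  constructor <;> rw [Prod.le_def] <;> constructor <;> simp <;>
    rcases ha with rfl | rfl <;> rcases hb with rfl | rfl <;> linarith

lemma dist_pt {x y δ a b : ℝ} (hδ : 0 ≤ δ) (ha : a = x ∨ a = x + δ)
    (hb : b = y ∨ b = y + δ) {c d : ℝ} (hc : c = x ∨ c = x + δ) (hd : d = y ∨ d = y + δ) :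
    dist ((a,b) : ℝ × ℝ) ((c,d) : ℝ × ℝ) ≤ δ := by
  have aux : ∀ u v w : ℝ, u = w ∨ u = w + δ → ∀ z : ℝ, z = w ∨ z = w + δ → |u - z| ≤ δ := by
    intro u v w hu z hz
    rcases hu with rfl | rfl <;> rcases hz with rfl | rfl <;> rw [abs_le] <;>
      constructor <;> linarith
  rw [Prod.dist_eq]
  exact max_le (by simpa [Real.dist_eq] using aux a 0 x ha c hc)
    (by simpa [Real.dist_eq] using aux b 0 y hb d hd)


noncomputable def sqTerm (f g h : ℝ × ℝ → ℝ) (δ x y : ℝ) : ℝ :=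
  f (x,y) * ((g (x+δ,y) - g (x,y)) * (h (x+δ,y+δ) - h (x+δ,y))
        - (g (x,y+δ) - g (x,y)) * (h (x+δ,y+δ) - h (x,y+δ)))
    + f (x+δ,y+δ) * ((g (x,y+δ) - g (x+δ,y+δ)) * (h (x,y) - h (x,y+δ))
        - (g (x+δ,y) - g (x+δ,y+δ)) * (h (x,y) - h (x+δ,y)))
    - f (x+δ,y) * ((g (x,y) - g (x+δ,y)) * (h (x,y+δ) - h (x,y))
        - (g (x+δ,y+δ) - g (x+δ,y)) * (h (x,y+δ) - h (x+δ,y+δ)))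
    - f (x,y+δ) * ((g (x+δ,y+δ) - g (x,y+δ)) * (h (x+δ,y) - h (x+δ,y+δ))
        - (g (x,y) - g (x,y+δ)) * (h (x+δ,y) - h (x,y)))

set_option maxHeartbeats 1000000 in
lemma square_est (f g h : ℝ × ℝ → ℝ) (hf : ContDiff ℝ (⊤ : ℕ∞) f) (hg : ContDiff ℝ (⊤ : ℕ∞) g)
    (hh : ContDiff ℝ (⊤ : ℕ∞) h) {M rg rh ε₀ δ : ℝ} (hM : 1 ≤ M)
    (hMf : ∀ x ∈ Set.Icc ((-1:ℝ),(-1:ℝ)) (2,2), ‖f x‖ ≤ M)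
    (hMfd : ∀ x ∈ Set.Icc ((-1:ℝ),(-1:ℝ)) (2,2), ‖fderiv ℝ f x‖ ≤ M)
    (hMgd : ∀ x ∈ Set.Icc ((-1:ℝ),(-1:ℝ)) (2,2), ‖fderiv ℝ g x‖ ≤ M)
    (hMhd : ∀ x ∈ Set.Icc ((-1:ℝ),(-1:ℝ)) (2,2), ‖fderiv ℝ h x‖ ≤ M)
    (hε₀pos : 0 < ε₀) (hε₀1 : ε₀ ≤ 1/2)
    (hmodg : ∀ x ∈ Set.Icc ((-1:ℝ),(-1:ℝ)) (2,2), ∀ y ∈ Set.Icc ((-1:ℝ),(-1:ℝ)) (2,2),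
      dist x y < rg → ‖fderiv ℝ g x - fderiv ℝ g y‖ ≤ ε₀)
    (hmodh : ∀ x ∈ Set.Icc ((-1:ℝ),(-1:ℝ)) (2,2), ∀ y ∈ Set.Icc ((-1:ℝ),(-1:ℝ)) (2,2),
      dist x y < rh → ‖fderiv ℝ h x - fderiv ℝ h y‖ ≤ ε₀)
    (hδpos : 0 < δ) (hδ1 : δ ≤ 1) (hδrg : δ < rg) (hδrh : δ < rh) (hδM : M * δ ≤ ε₀)
    {x y : ℝ} (hx0 : 0 ≤ x) (hy0 : 0 ≤ y) (hx1 : x + δ ≤ 1) (hy1 : y + δ ≤ 1) :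
    |sqTerm f g h δ x y
      - 4*(δ^2 * (f (x,y) * (fderiv ℝ g (x,y) (1,0) * fderiv ℝ h (x,y) (0,1)
          - fderiv ℝ g (x,y) (0,1) * fderiv ℝ h (x,y) (1,0))))| ≤ 200*M^2*ε₀*δ^2 := by
  simp only [sqTerm]
  have hδ := hδpos.le
  have hsub : Set.Icc ((0:ℝ),(0:ℝ)) (1,1) ⊆ Set.Icc ((-1:ℝ),(-1:ℝ)) (2,2) :=
    Set.Icc_subset_Icc (by rw [Prod.le_def]; constructor <;> norm_num)
      (by rw [Prod.le_def]; constructor <;> norm_num)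
  have m00 := mem_sq hx0 hy0 hδ hx1 hy1 (Or.inl rfl) (Or.inl rfl)
  have m10 := mem_sq hx0 hy0 hδ hx1 hy1 (Or.inr rfl) (Or.inl rfl)
  have m11 := mem_sq hx0 hy0 hδ hx1 hy1 (Or.inr rfl) (Or.inr rfl)
  have m01 := mem_sq hx0 hy0 hδ hx1 hy1 (Or.inl rfl) (Or.inr rfl)
  have habsδ : |δ| ≤ δ := le_of_eq (abs_of_nonneg hδ)
  have habsδ' : |(-δ)| ≤ δ := by rw [abs_neg]; exact habsδ
  -- the eight edge estimates
  have hA : |g (x+δ,y) - g (x,y) - δ * fderiv ℝ g (x,y) (1,0)| ≤ 2*ε₀*δ := by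
    have := diff_est hg hε₀pos.le hmodg hδpos hδ1 hδrg m00 m00 (by simpa using hδ) norm_e1 habsδ
    rwa [add_smul_e1] at this
  have hB : |g (x,y+δ) - g (x,y) - δ * fderiv ℝ g (x,y) (0,1)| ≤ 2*ε₀*δ := by
    have := diff_est hg hε₀pos.le hmodg hδpos hδ1 hδrg m00 m00 (by simpa using hδ) norm_e2 habsδ
    rwa [add_smul_e2] at this
  have hC : |g (x,y+δ) - g (x+δ,y+δ) + δ * fderiv ℝ g (x,y) (1,0)| ≤ 2*ε₀*δ := by
    have := diff_est hg hε₀pos.le hmodg hδpos hδ1 hδrg m11 m00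
      (dist_pt hδ (Or.inr rfl) (Or.inr rfl) (Or.inl rfl) (Or.inl rfl)) norm_e1 habsδ'
    rw [add_smul_e1, show x + δ + -δ = x from by ring] at this
    rwa [show g (x,y+δ) - g (x+δ,y+δ) + δ * fderiv ℝ g (x,y) (1,0)
      = g (x,y+δ) - g (x+δ,y+δ) - (-δ) * fderiv ℝ g (x,y) (1,0) from by ring]
  have hD : |g (x+δ,y) - g (x+δ,y+δ) + δ * fderiv ℝ g (x,y) (0,1)| ≤ 2*ε₀*δ := by
    have := diff_est hg hε₀pos.le hmodg hδpos hδ1 hδrg m11 m00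
      (dist_pt hδ (Or.inr rfl) (Or.inr rfl) (Or.inl rfl) (Or.inl rfl)) norm_e2 habsδ'
    rw [add_smul_e2, show y + δ + -δ = y from by ring] at this
    rwa [show g (x+δ,y) - g (x+δ,y+δ) + δ * fderiv ℝ g (x,y) (0,1)
      = g (x+δ,y) - g (x+δ,y+δ) - (-δ) * fderiv ℝ g (x,y) (0,1) from by ring]
  have hP : |h (x+δ,y+δ) - h (x+δ,y) - δ * fderiv ℝ h (x,y) (0,1)| ≤ 2*ε₀*δ := by
    have := diff_est hh hε₀pos.le hmodh hδpos hδ1 hδrh m10 m00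
      (dist_pt hδ (Or.inr rfl) (Or.inl rfl) (Or.inl rfl) (Or.inl rfl)) norm_e2 habsδ
    rwa [add_smul_e2] at this
  have hQ : |h (x+δ,y+δ) - h (x,y+δ) - δ * fderiv ℝ h (x,y) (1,0)| ≤ 2*ε₀*δ := by
    have := diff_est hh hε₀pos.le hmodh hδpos hδ1 hδrh m01 m00
      (dist_pt hδ (Or.inl rfl) (Or.inr rfl) (Or.inl rfl) (Or.inl rfl)) norm_e1 habsδ
    rwa [add_smul_e1] at this
  have hR : |h (x,y) - h (x,y+δ) + δ * fderiv ℝ h (x,y) (0,1)| ≤ 2*ε₀*δ := by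
    have := diff_est hh hε₀pos.le hmodh hδpos hδ1 hδrh m01 m00
      (dist_pt hδ (Or.inl rfl) (Or.inr rfl) (Or.inl rfl) (Or.inl rfl)) norm_e2 habsδ'
    rw [add_smul_e2, show y + δ + -δ = y from by ring] at this
    rwa [show h (x,y) - h (x,y+δ) + δ * fderiv ℝ h (x,y) (0,1)
      = h (x,y) - h (x,y+δ) - (-δ) * fderiv ℝ h (x,y) (0,1) from by ring]
  have hS : |h (x,y) - h (x+δ,y) + δ * fderiv ℝ h (x,y) (1,0)| ≤ 2*ε₀*δ := by
    have := diff_est hh hε₀pos.le hmodh hδpos hδ1 hδrh m10 m00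
      (dist_pt hδ (Or.inr rfl) (Or.inl rfl) (Or.inl rfl) (Or.inl rfl)) norm_e1 habsδ'
    rw [add_smul_e1, show x + δ + -δ = x from by ring] at this
    rwa [show h (x,y) - h (x+δ,y) + δ * fderiv ℝ h (x,y) (1,0)
      = h (x,y) - h (x+δ,y) - (-δ) * fderiv ℝ h (x,y) (1,0) from by ring]
  -- f vertex estimates
  have hlip : ∀ p q : ℝ × ℝ, p ∈ Set.Icc ((0:ℝ),(0:ℝ)) (1,1) → q ∈ Set.Icc ((0:ℝ),(0:ℝ)) (1,1) →
      dist q p ≤ δ → |f q - f p| ≤ 2*ε₀ := by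
    intro p q hp hq hdpq
    have := lip_est hf (convex_Icc _ _) hMfd (hsub hp) (hsub hq)
    rw [Real.norm_eq_abs, ← dist_eq_norm] at this
    calc |f q - f p| ≤ M * dist q p := this
      _ ≤ M * δ := mul_le_mul_of_nonneg_left hdpq (by linarith)
      _ ≤ ε₀ := hδM
      _ ≤ 2*ε₀ := by linarith
  have hf1 : |f (x+δ,y) - f (x,y)| ≤ 2*ε₀ :=
    hlip _ _ m00 m10 (dist_pt hδ (Or.inr rfl) (Or.inl rfl) (Or.inl rfl) (Or.inl rfl))
  have hf2 : |f (x+δ,y+δ) - f (x,y)| ≤ 2*ε₀ :=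
    hlip _ _ m00 m11 (dist_pt hδ (Or.inr rfl) (Or.inr rfl) (Or.inl rfl) (Or.inl rfl))
  have hf3 : |f (x,y+δ) - f (x,y)| ≤ 2*ε₀ :=
    hlip _ _ m00 m01 (dist_pt hδ (Or.inl rfl) (Or.inr rfl) (Or.inl rfl) (Or.inl rfl))
  -- bounds on derivative components and f
  have hcomp : ∀ (φ : ℝ × ℝ → ℝ), (∀ x ∈ Set.Icc ((-1:ℝ),(-1:ℝ)) (2,2), ‖fderiv ℝ φ x‖ ≤ M) →
      ∀ e : ℝ × ℝ, ‖e‖ ≤ 1 → |fderiv ℝ φ (x,y) e| ≤ M := by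
    intro φ hφ e he
    calc |fderiv ℝ φ (x,y) e| ≤ ‖fderiv ℝ φ (x,y)‖ * ‖e‖ := (fderiv ℝ φ (x,y)).le_opNorm e
      _ ≤ M * 1 := mul_le_mul (hφ _ (hsub m00)) he (norm_nonneg _) (by linarith)
      _ = M := by ring
  have hf0 : |f (x,y)| ≤ M := by
    have := hMf _ (hsub m00); rwa [Real.norm_eq_abs] at this
  -- apply the algebraic estimate
  have halg := sq_est (M := M) (ε := 2*ε₀) (δ := δ) hM (by linarith) (by linarith) hδ
    hf0 hf1 hf2 hf3
    (hcomp g hMgd _ norm_e1) (hcomp g hMgd _ norm_e2)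
    (hcomp h hMhd _ norm_e1) (hcomp h hMhd _ norm_e2)
    hA hB hC hD hP hQ hR hS
  rw [show (f (x,y) * ((g (x+δ,y) - g (x,y)) * (h (x+δ,y+δ) - h (x+δ,y))
          - (g (x,y+δ) - g (x,y)) * (h (x+δ,y+δ) - h (x,y+δ)))
      + f (x+δ,y+δ) * ((g (x,y+δ) - g (x+δ,y+δ)) * (h (x,y) - h (x,y+δ))
          - (g (x+δ,y) - g (x+δ,y+δ)) * (h (x,y) - h (x+δ,y)))
      - f (x+δ,y) * ((g (x,y) - g (x+δ,y)) * (h (x,y+δ) - h (x,y))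
          - (g (x+δ,y+δ) - g (x+δ,y)) * (h (x,y+δ) - h (x+δ,y+δ)))
      - f (x,y+δ) * ((g (x+δ,y+δ) - g (x,y+δ)) * (h (x+δ,y) - h (x+δ,y+δ))
          - (g (x,y) - g (x,y+δ)) * (h (x+δ,y) - h (x,y))))
      - 4*(δ^2 * (f (x,y) * (fderiv ℝ g (x,y) (1,0) * fderiv ℝ h (x,y) (0,1)
          - fderiv ℝ g (x,y) (0,1) * fderiv ℝ h (x,y) (1,0))))
    = (f (x,y)*((g (x+δ,y) - g (x,y))*(h (x+δ,y+δ) - h (x+δ,y))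
          - (g (x,y+δ) - g (x,y))*(h (x+δ,y+δ) - h (x,y+δ)))
      + f (x+δ,y+δ)*((g (x,y+δ) - g (x+δ,y+δ))*(h (x,y) - h (x,y+δ))
          - (g (x+δ,y) - g (x+δ,y+δ))*(h (x,y) - h (x+δ,y)))
      - f (x+δ,y)*((g (x+δ,y) - g (x,y))*(h (x,y) - h (x,y+δ))
          - (g (x+δ,y) - g (x+δ,y+δ))*(h (x+δ,y+δ) - h (x,y+δ)))
      - f (x,y+δ)*((g (x,y+δ) - g (x+δ,y+δ))*(h (x+δ,y+δ) - h (x+δ,y))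
          - (g (x,y+δ) - g (x,y))*(h (x,y) - h (x+δ,y))))
      - 4*δ^2*f (x,y)*(fderiv ℝ g (x,y) (1,0) * fderiv ℝ h (x,y) (0,1)
          - fderiv ℝ g (x,y) (0,1) * fderiv ℝ h (x,y) (1,0)) from by ring]
  calc _ ≤ 100*M^2*(2*ε₀)*δ^2 := halg
    _ = 200*M^2*ε₀*δ^2 := by ring

lemma riemann2 (F : ℝ × ℝ → ℝ) (hF : Continuous F) :
    Tendsto (fun n : ℕ => ∑ i : Fin (2 ^ n), ∑ j : Fin (2 ^ n),
        ((1:ℝ)/2^n)^2 * F ((i : ℝ) * ((1:ℝ)/2^n), (j : ℝ) * ((1:ℝ)/2^n))) atTop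
      (𝓝 (∫ p in Set.Icc ((0 : ℝ), (0 : ℝ)) (1, 1), F p)) := by
  have hunc : Continuous (Function.uncurry fun x y => F (x, y)) := hF
  have hG : ∀ c d : ℝ, Continuous (fun x => ∫ y in c..d, F (x, y)) := fun c d =>
    continuous_parametric_intervalIntegral_of_continuous' hunc c d
  -- rewrite the integral as iterated interval integrals
  have h1 : ∀ φ : ℝ → ℝ, ∫ t in Icc (0:ℝ) 1, φ t = ∫ t in (0:ℝ)..1, φ t := fun φ => by
    rw [intervalIntegral.integral_of_le zero_le_one, integral_Icc_eq_integral_Ioc]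
  have hI : ∫ p in Set.Icc ((0 : ℝ), (0 : ℝ)) (1, 1), F p
      = ∫ x in (0:ℝ)..1, ∫ y in (0:ℝ)..1, F (x, y) := by
    rw [show Set.Icc ((0:ℝ),(0:ℝ)) (1,1) = Icc (0:ℝ) 1 ×ˢ Icc (0:ℝ) 1 from (Set.Icc_prod_eq _ _),
      Measure.volume_eq_prod]
    rw [setIntegral_prod F (by
      rw [← Measure.volume_eq_prod]
      exact hF.continuousOn.integrableOn_compact (isCompact_Icc.prod isCompact_Icc))]
    rw [← h1]
    exact setIntegral_congr_fun measurableSet_Icc fun x _ => h1 _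
  rw [hI]
  -- ε-argument
  rw [Metric.tendsto_atTop]
  intro ε hε
  -- uniform continuity on the unit square
  obtain ⟨r, hr, hmod⟩ : ∃ r > 0, ∀ p ∈ Set.Icc ((0:ℝ),(0:ℝ)) (1,1),
      ∀ q ∈ Set.Icc ((0:ℝ),(0:ℝ)) (1,1), dist p q < r → dist (F p) (F q) < ε/2 := by
    have := (isCompact_Icc (a := ((0:ℝ),(0:ℝ))) (b := (1,1))).uniformContinuousOn_of_continuous
      hF.continuousOn
    rw [Metric.uniformContinuousOn_iff] at this
    obtain ⟨δ, hδ, hmod⟩ := this (ε/2) (by linarith)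
    exact ⟨δ, hδ, fun p hp q hq hpq => hmod p hp q hq hpq⟩
  obtain ⟨N, hN⟩ : ∃ N : ℕ, (1:ℝ)/2^N < r := by
    obtain ⟨N, hN⟩ := exists_pow_lt_of_lt_one hr (by norm_num : (1:ℝ)/2 < 1)
    exact ⟨N, by rwa [one_div_pow] at hN⟩
  refine ⟨N, fun n hn => ?_⟩
  set δ : ℝ := (1:ℝ)/2^n with hδdef
  have hδpos : 0 < δ := by positivity
  have hδr : δ < r := lt_of_le_of_lt (by
    apply one_div_le_one_div_of_le (by positivity)
    exact pow_le_pow_right₀ (by norm_num) hn) hN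
  have hcard : (2^n : ℝ) * δ = 1 := by
    rw [hδdef]
    field_simp
  -- key per-square estimate
  have key : ∀ i j : ℕ, i < 2^n → j < 2^n →
      |((∫ x in (i:ℝ)*δ..((i:ℝ)+1)*δ, ∫ y in (j:ℝ)*δ..((j:ℝ)+1)*δ, F (x, y))
        - δ^2 * F ((i:ℝ)*δ, (j:ℝ)*δ))| ≤ ε/2 * δ^2 := by
    intro i j hi hj
    set a := (i:ℝ)*δ; set b := ((i:ℝ)+1)*δ; set c := (j:ℝ)*δ; set d := ((j:ℝ)+1)*δ
    have hab : a ≤ b := by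
      have : (i:ℝ) ≤ (i:ℝ)+1 := by linarith
      exact mul_le_mul_of_nonneg_right this hδpos.le
    have hcd : c ≤ d := by
      have : (j:ℝ) ≤ (j:ℝ)+1 := by linarith
      exact mul_le_mul_of_nonneg_right this hδpos.le
    have hba : b - a = δ := by ring
    have hdc : d - c = δ := by ring
    have ha0 : 0 ≤ a := by positivity
    have hb1 : b ≤ 1 := by
      have : (i:ℝ) + 1 ≤ 2^n := by
        have : (i:ℝ) + 1 ≤ ((2:ℝ))^n := by
          have := (Nat.add_one_le_iff.mpr hi)
          calc (i:ℝ) + 1 = ((i+1 : ℕ) : ℝ) := by push_cast; ring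
          _ ≤ ((2^n : ℕ) : ℝ) := by exact_mod_cast Nat.cast_le.mpr this
          _ = (2:ℝ)^n := by push_cast; ring
        exact this
      calc b ≤ (2:ℝ)^n * δ := mul_le_mul_of_nonneg_right this hδpos.le
      _ = 1 := hcard
    have hc0 : 0 ≤ c := by positivity
    have hd1 : d ≤ 1 := by
      have : (j:ℝ) + 1 ≤ (2:ℝ)^n := by
        have := (Nat.add_one_le_iff.mpr hj)
        calc (j:ℝ) + 1 = ((j+1 : ℕ) : ℝ) := by push_cast; ring
        _ ≤ ((2^n : ℕ) : ℝ) := by exact_mod_cast Nat.cast_le.mpr this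
        _ = (2:ℝ)^n := by push_cast; ring
      calc d ≤ (2:ℝ)^n * δ := mul_le_mul_of_nonneg_right this hδpos.le
      _ = 1 := hcard
    have hvmem : ((a, c) : ℝ × ℝ) ∈ Set.Icc ((0:ℝ),(0:ℝ)) (1,1) := by
      constructor <;> constructor <;> simp <;> first
        | exact ha0 | exact hc0 | linarith | linarith
    -- inner estimate
    have inner : ∀ x ∈ Set.uIoc a b,
        ‖(∫ y in c..d, F (x, y)) - δ * F (a, c)‖ ≤ ε/2 * δ := by
      intro x hx
      rw [Set.uIoc_of_le hab] at hx
      have hx0 : 0 ≤ x := le_trans ha0 hx.1.le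
      have hx1 : x ≤ 1 := le_trans hx.2 hb1
      have hxa : |x - a| ≤ δ := by
        rw [abs_le]; constructor <;> [linarith [hx.1.le]; linarith [hx.2]]
      have : (∫ y in c..d, F (x, y)) - δ * F (a, c)
          = ∫ y in c..d, (F (x, y) - F (a, c)) := by
        rw [intervalIntegral.integral_sub ((by fun_prop : Continuous fun y => F (x, y)).intervalIntegrable c d) (intervalIntegrable_const),
          intervalIntegral.integral_const, smul_eq_mul, hdc]
      rw [this]
      have := intervalIntegral.norm_integral_le_of_norm_le_const (C := ε/2)
        (f := fun y => F (x, y) - F (a, c)) (a := c) (b := d) ?_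
      · calc ‖∫ y in c..d, (F (x, y) - F (a, c))‖ ≤ ε/2 * |d - c| := this
          _ = ε/2 * δ := by rw [hdc, abs_of_pos hδpos]
      · intro y hy
        rw [Set.uIoc_of_le hcd] at hy
        have hy0 : 0 ≤ y := le_trans hc0 hy.1.le
        have hy1 : y ≤ 1 := le_trans hy.2 hd1
        have hyc : |y - c| ≤ δ := by
          rw [abs_le]; constructor <;> [linarith [hy.1.le]; linarith [hy.2]]
        have hdist : dist ((x, y) : ℝ × ℝ) (a, c) < r := by
          rw [Prod.dist_eq]
          simp only [Real.dist_eq]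
          exact lt_of_le_of_lt (max_le hxa hyc) hδr
        have hmem : ((x, y) : ℝ × ℝ) ∈ Set.Icc ((0:ℝ),(0:ℝ)) (1,1) := by
          constructor <;> constructor <;> simpa
        have := hmod _ hmem _ hvmem hdist
        rw [Real.dist_eq] at this
        exact le_of_lt (by simpa using this)
    -- outer estimate
    have houter : (∫ x in a..b, ∫ y in c..d, F (x, y)) - δ^2 * F (a, c)
        = ∫ x in a..b, ((∫ y in c..d, F (x, y)) - δ * F (a, c)) := by
      rw [intervalIntegral.integral_sub ((hG c d).intervalIntegrable a b)
        (intervalIntegrable_const), intervalIntegral.integral_const, smul_eq_mul, hba]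
      ring
    rw [houter]
    have := intervalIntegral.norm_integral_le_of_norm_le_const (C := ε/2 * δ)
      (f := fun x => (∫ y in c..d, F (x, y)) - δ * F (a, c)) (a := a) (b := b) inner
    calc |∫ x in a..b, ((∫ y in c..d, F (x, y)) - δ * F (a, c))| ≤ ε/2 * δ * |b - a| := this
      _ = ε/2 * δ^2 := by rw [hba, abs_of_pos hδpos]; ring
  -- split the integral into the dyadic pieces
  have hsplit : (∫ x in (0:ℝ)..1, ∫ y in (0:ℝ)..1, F (x, y))
      = ∑ i ∈ Finset.range (2^n), ∑ j ∈ Finset.range (2^n),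
          ∫ x in (i:ℝ)*δ..((i:ℝ)+1)*δ, ∫ y in (j:ℝ)*δ..((j:ℝ)+1)*δ, F (x, y) := by
    have inner_split : ∀ x : ℝ, (∫ y in (0:ℝ)..1, F (x, y))
        = ∑ j ∈ Finset.range (2^n), ∫ y in (j:ℝ)*δ..((j:ℝ)+1)*δ, F (x, y) := by
      intro x
      have H := intervalIntegral.sum_integral_adjacent_intervals (μ := volume)
        (a := fun k : ℕ => (k:ℝ)*δ) (n := 2^n) (f := fun y => F (x, y))
        (fun k _ => (by fun_prop : Continuous fun y => F (x, y)).intervalIntegrable _ _)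
      simp only [Nat.cast_zero, zero_mul, Nat.cast_add, Nat.cast_one, Nat.cast_pow,
        Nat.cast_ofNat] at H
      rw [hcard] at H
      exact H.symm
    have outer_cont : Continuous (fun x : ℝ => ∑ j ∈ Finset.range (2^n),
        ∫ y in (j:ℝ)*δ..((j:ℝ)+1)*δ, F (x, y)) :=
      continuous_finset_sum _ fun j _ => hG _ _
    calc (∫ x in (0:ℝ)..1, ∫ y in (0:ℝ)..1, F (x, y))
        = ∫ x in (0:ℝ)..1, ∑ j ∈ Finset.range (2^n),
            ∫ y in (j:ℝ)*δ..((j:ℝ)+1)*δ, F (x, y) := by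
          apply intervalIntegral.integral_congr
          intro x _
          exact inner_split x
      _ = ∑ i ∈ Finset.range (2^n), ∫ x in (i:ℝ)*δ..((i:ℝ)+1)*δ,
            ∑ j ∈ Finset.range (2^n), ∫ y in (j:ℝ)*δ..((j:ℝ)+1)*δ, F (x, y) := by
          have H := intervalIntegral.sum_integral_adjacent_intervals (μ := volume)
            (a := fun k : ℕ => (k:ℝ)*δ) (n := 2^n)
            (f := fun x => ∑ j ∈ Finset.range (2^n),
              ∫ y in (j:ℝ)*δ..((j:ℝ)+1)*δ, F (x, y))
            (fun k _ => outer_cont.intervalIntegrable _ _)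
          simp only [Nat.cast_zero, zero_mul, Nat.cast_add, Nat.cast_one, Nat.cast_pow,
            Nat.cast_ofNat] at H
          rw [hcard] at H
          exact H.symm
      _ = ∑ i ∈ Finset.range (2^n), ∑ j ∈ Finset.range (2^n),
            ∫ x in (i:ℝ)*δ..((i:ℝ)+1)*δ, ∫ y in (j:ℝ)*δ..((j:ℝ)+1)*δ, F (x, y) := by
          refine Finset.sum_congr rfl fun i _ => ?_
          exact intervalIntegral.integral_finset_sum
            (fun j _ => (hG _ _).intervalIntegrable _ _)
  rw [hsplit]
  have conv1 : (∑ i : Fin (2^n), ∑ j : Fin (2^n), δ^2 * F ((i:ℝ)*δ, (j:ℝ)*δ))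
      = ∑ i ∈ Finset.range (2^n), ∑ j ∈ Finset.range (2^n), δ^2 * F ((i:ℝ)*δ, (j:ℝ)*δ) := by
    rw [Fin.sum_univ_eq_sum_range (fun i : ℕ => ∑ j : Fin (2^n), δ^2 * F ((i:ℝ)*δ, (j:ℝ)*δ))]
    exact Finset.sum_congr rfl fun i _ =>
      Fin.sum_univ_eq_sum_range (fun j : ℕ => δ^2 * F ((i:ℝ)*δ, (j:ℝ)*δ)) _
  rw [conv1, Real.dist_eq]
  have step : |(∑ i ∈ Finset.range (2^n), ∑ j ∈ Finset.range (2^n), δ^2 * F ((i:ℝ)*δ, (j:ℝ)*δ))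
      - ∑ i ∈ Finset.range (2^n), ∑ j ∈ Finset.range (2^n),
          ∫ x in (i:ℝ)*δ..((i:ℝ)+1)*δ, ∫ y in (j:ℝ)*δ..((j:ℝ)+1)*δ, F (x, y)|
      ≤ ∑ i ∈ Finset.range (2^n), ∑ j ∈ Finset.range (2^n), ε/2 * δ^2 := by
    rw [← Finset.sum_sub_distrib]
    refine le_trans (Finset.abs_sum_le_sum_abs _ _) (Finset.sum_le_sum fun i hi => ?_)
    rw [← Finset.sum_sub_distrib]
    refine le_trans (Finset.abs_sum_le_sum_abs _ _) (Finset.sum_le_sum fun j hj => ?_)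
    rw [abs_sub_comm]
    exact key i j (Finset.mem_range.mp hi) (Finset.mem_range.mp hj)
  have total : ∑ i ∈ Finset.range (2^n), ∑ j ∈ Finset.range (2^n), ε/2 * δ^2 = ε/2 := by
    simp only [Finset.sum_const, Finset.card_range, nsmul_eq_mul]
    rw [hδdef]
    push_cast
    field_simp
  calc |(∑ i ∈ Finset.range (2^n), ∑ j ∈ Finset.range (2^n), δ^2 * F ((i:ℝ)*δ, (j:ℝ)*δ))
      - ∑ i ∈ Finset.range (2^n), ∑ j ∈ Finset.range (2^n),
          ∫ x in (i:ℝ)*δ..((i:ℝ)+1)*δ, ∫ y in (j:ℝ)*δ..((j:ℝ)+1)*δ, F (x, y)| ≤ ε/2 := by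
        rw [← total]; exact step
    _ < ε := by linarith


set_option maxHeartbeats 1600000 in
/-- The Riemann-type sums of the combinatorial trace formula over the `2ⁿ`-fold
dyadic subdivision of `[0,1]²` converge to `2∫ f̃ dg̃ ∧ dh̃` for smooth functions
on the torus (identified with doubly 1-periodic functions on `ℝ²`). -/
theorem stmt16 (f g h : ℝ × ℝ → ℝ)
    (hf : ContDiff ℝ (⊤ : ℕ∞) f) (hg : ContDiff ℝ (⊤ : ℕ∞) g) (hh : ContDiff ℝ (⊤ : ℕ∞) h)
    (hfp : ∀ x y : ℝ, f (x + 1, y) = f (x, y) ∧ f (x, y + 1) = f (x, y))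
    (hgp : ∀ x y : ℝ, g (x + 1, y) = g (x, y) ∧ g (x, y + 1) = g (x, y))
    (hhp : ∀ x y : ℝ, h (x + 1, y) = h (x, y) ∧ h (x, y + 1) = h (x, y)) :
    Tendsto
      (fun n : ℕ =>
        (1/2 : ℝ) * ∑ i : Fin (2 ^ n), ∑ j : Fin (2 ^ n),
          (let δ : ℝ := (1 : ℝ) / 2 ^ n
           let v0 : ℝ × ℝ := ((i : ℝ) * δ, (j : ℝ) * δ)
           let v1 : ℝ × ℝ := (((i : ℝ) + 1) * δ, (j : ℝ) * δ)
           let v2 : ℝ × ℝ := (((i : ℝ) + 1) * δ, ((j : ℝ) + 1) * δ)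
           let v3 : ℝ × ℝ := ((i : ℝ) * δ, ((j : ℝ) + 1) * δ)
           f v0 * ((g v1 - g v0) * (h v2 - h v1) - (g v3 - g v0) * (h v2 - h v3))
             + f v2 * ((g v3 - g v2) * (h v0 - h v3) - (g v1 - g v2) * (h v0 - h v1))
             - f v1 * ((g v0 - g v1) * (h v3 - h v0) - (g v2 - g v1) * (h v3 - h v2))
             - f v3 * ((g v2 - g v3) * (h v1 - h v2) - (g v0 - g v3) * (h v1 - h v0))))
      atTop
      (nhds (2 * ∫ p in Set.Icc ((0 : ℝ), (0 : ℝ)) (1, 1),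
        f p * (fderiv ℝ g p (1, 0) * fderiv ℝ h p (0, 1)
          - fderiv ℝ g p (0, 1) * fderiv ℝ h p (1, 0)))) := by
  have hgd : Continuous (fderiv ℝ g) := hg.continuous_fderiv (by simp)
  have hhd : Continuous (fderiv ℝ h) := hh.continuous_fderiv (by simp)
  have hfd : Continuous (fderiv ℝ f) := hf.continuous_fderiv (by simp)
  set Φ : ℝ × ℝ → ℝ := fun p => f p * (fderiv ℝ g p (1, 0) * fderiv ℝ h p (0, 1)
      - fderiv ℝ g p (0, 1) * fderiv ℝ h p (1, 0)) with hΦ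
  have hΦc : Continuous Φ := by
    rw [hΦ]
    exact (hf.continuous).mul
      (((hgd.clm_apply continuous_const).mul (hhd.clm_apply continuous_const)).sub
        ((hgd.clm_apply continuous_const).mul (hhd.clm_apply continuous_const)))
  have main := (riemann2 Φ hΦc).const_mul (2:ℝ)
  suffices hdiff : Tendsto
      (fun n : ℕ =>
        ((1/2 : ℝ) * ∑ i : Fin (2 ^ n), ∑ j : Fin (2 ^ n),
          (let δ : ℝ := (1 : ℝ) / 2 ^ n
           let v0 : ℝ × ℝ := ((i : ℝ) * δ, (j : ℝ) * δ)
           let v1 : ℝ × ℝ := (((i : ℝ) + 1) * δ, (j : ℝ) * δ)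
           let v2 : ℝ × ℝ := (((i : ℝ) + 1) * δ, ((j : ℝ) + 1) * δ)
           let v3 : ℝ × ℝ := ((i : ℝ) * δ, ((j : ℝ) + 1) * δ)
           f v0 * ((g v1 - g v0) * (h v2 - h v1) - (g v3 - g v0) * (h v2 - h v3))
             + f v2 * ((g v3 - g v2) * (h v0 - h v3) - (g v1 - g v2) * (h v0 - h v1))
             - f v1 * ((g v0 - g v1) * (h v3 - h v0) - (g v2 - g v1) * (h v3 - h v2))
             - f v3 * ((g v2 - g v3) * (h v1 - h v2) - (g v0 - g v3) * (h v1 - h v0))))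
        - 2 * ∑ i : Fin (2 ^ n), ∑ j : Fin (2 ^ n),
            ((1:ℝ)/2^n)^2 * Φ ((i : ℝ) * ((1:ℝ)/2^n), (j : ℝ) * ((1:ℝ)/2^n)))
      atTop (𝓝 0) by
    have comb := hdiff.add main
    rw [zero_add] at comb
    exact comb.congr fun n => by ring
  -- replace the `let`-summand by `sqTerm`
  have hrepr : ∀ n : ℕ,
      (∑ i : Fin (2 ^ n), ∑ j : Fin (2 ^ n),
        (let δ : ℝ := (1 : ℝ) / 2 ^ n
           let v0 : ℝ × ℝ := ((i : ℝ) * δ, (j : ℝ) * δ)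
           let v1 : ℝ × ℝ := (((i : ℝ) + 1) * δ, (j : ℝ) * δ)
           let v2 : ℝ × ℝ := (((i : ℝ) + 1) * δ, ((j : ℝ) + 1) * δ)
           let v3 : ℝ × ℝ := ((i : ℝ) * δ, ((j : ℝ) + 1) * δ)
           f v0 * ((g v1 - g v0) * (h v2 - h v1) - (g v3 - g v0) * (h v2 - h v3))
             + f v2 * ((g v3 - g v2) * (h v0 - h v3) - (g v1 - g v2) * (h v0 - h v1))
             - f v1 * ((g v0 - g v1) * (h v3 - h v0) - (g v2 - g v1) * (h v3 - h v2))
             - f v3 * ((g v2 - g v3) * (h v1 - h v2) - (g v0 - g v3) * (h v1 - h v0))))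
      = ∑ i : Fin (2 ^ n), ∑ j : Fin (2 ^ n),
          sqTerm f g h ((1:ℝ)/2^n) ((i : ℝ) * ((1:ℝ)/2^n)) ((j : ℝ) * ((1:ℝ)/2^n)) := by
    intro n
    refine Finset.sum_congr rfl fun i _ => Finset.sum_congr rfl fun j _ => ?_
    dsimp only [sqTerm]
    rw [show ((i:ℝ)+1)*((1:ℝ)/2^n) = (i:ℝ)*((1:ℝ)/2^n) + (1:ℝ)/2^n from by ring,
      show ((j:ℝ)+1)*((1:ℝ)/2^n) = (j:ℝ)*((1:ℝ)/2^n) + (1:ℝ)/2^n from by ring]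
  simp only [hrepr]
  -- bounds on `f`, `g`, `h` and their derivatives on `K`
  have hK : IsCompact (Set.Icc ((-1:ℝ),(-1:ℝ)) (2,2)) := isCompact_Icc
  obtain ⟨M0, hM0⟩ := hK.exists_bound_of_continuousOn hf.continuous.continuousOn
  obtain ⟨M1, hM1⟩ := hK.exists_bound_of_continuousOn hfd.continuousOn
  obtain ⟨M2, hM2⟩ := hK.exists_bound_of_continuousOn hgd.continuousOn
  obtain ⟨M3, hM3⟩ := hK.exists_bound_of_continuousOn hhd.continuousOn
  set M : ℝ := max (max (max M0 M1) (max M2 M3)) 1 with hMdef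
  have hM : 1 ≤ M := le_max_right _ _
  have hMpos : (0:ℝ) < M := lt_of_lt_of_le one_pos hM
  have hMf : ∀ x ∈ Set.Icc ((-1:ℝ),(-1:ℝ)) (2,2), ‖f x‖ ≤ M := fun x hx =>
    (hM0 x hx).trans (le_trans (le_max_left _ _) (le_trans (le_max_left _ _) (le_max_left _ _)))
  have hMfd : ∀ x ∈ Set.Icc ((-1:ℝ),(-1:ℝ)) (2,2), ‖fderiv ℝ f x‖ ≤ M := fun x hx =>
    (hM1 x hx).trans (le_trans (le_max_right _ _) (le_trans (le_max_left _ _) (le_max_left _ _)))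
  have hMgd : ∀ x ∈ Set.Icc ((-1:ℝ),(-1:ℝ)) (2,2), ‖fderiv ℝ g x‖ ≤ M := fun x hx =>
    (hM2 x hx).trans (le_trans (le_max_left _ _) (le_trans (le_max_right _ _) (le_max_left _ _)))
  have hMhd : ∀ x ∈ Set.Icc ((-1:ℝ),(-1:ℝ)) (2,2), ‖fderiv ℝ h x‖ ≤ M := fun x hx =>
    (hM3 x hx).trans (le_trans (le_max_right _ _) (le_trans (le_max_right _ _) (le_max_left _ _)))
  rw [Metric.tendsto_atTop]
  intro ε' hε'
  set ε₀ : ℝ := min (1/2) (ε' / (200*M^2)) with hε₀def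
  have hε₀pos : 0 < ε₀ := lt_min (by norm_num) (by positivity)
  have hε₀half : ε₀ ≤ 1/2 := min_le_left _ _
  -- moduli of continuity for the derivatives
  have getmod : ∀ φ : ℝ × ℝ → ℝ, Continuous (fderiv ℝ φ) →
      ∃ r > 0, ∀ x ∈ Set.Icc ((-1:ℝ),(-1:ℝ)) (2,2), ∀ y ∈ Set.Icc ((-1:ℝ),(-1:ℝ)) (2,2),
        dist x y < r → ‖fderiv ℝ φ x - fderiv ℝ φ y‖ ≤ ε₀ := by
    intro φ hφd
    have := hK.uniformContinuousOn_of_continuous hφd.continuousOn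
    rw [Metric.uniformContinuousOn_iff] at this
    obtain ⟨r, hr, H⟩ := this ε₀ hε₀pos
    refine ⟨r, hr, fun x hx y hy hxy => ?_⟩
    have := H x hx y hy hxy
    rw [dist_eq_norm] at this
    exact this.le
  obtain ⟨rg, hrgpos, hmodg⟩ := getmod g hgd
  obtain ⟨rh, hrhpos, hmodh⟩ := getmod h hhd
  obtain ⟨N, hN⟩ : ∃ N : ℕ, (1:ℝ)/2^N < min (min rg rh) (ε₀/M) := by
    obtain ⟨N, hN⟩ := exists_pow_lt_of_lt_one
      (show (0:ℝ) < min (min rg rh) (ε₀/M) from lt_min (lt_min hrgpos hrhpos) (by positivity))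
      (by norm_num : (1:ℝ)/2 < 1)
    exact ⟨N, by rwa [one_div_pow] at hN⟩
  refine ⟨N, fun n hn => ?_⟩
  set δ : ℝ := (1:ℝ)/2^n with hδdef
  have hδpos : 0 < δ := by positivity
  have hδ1 : δ ≤ 1 := by
    rw [hδdef]
    rw [div_le_one (by positivity)]
    calc (1:ℝ) = 1^n := (one_pow n).symm
      _ ≤ 2^n := by gcongr <;> norm_num
  have hδN : δ ≤ (1:ℝ)/2^N := by
    apply one_div_le_one_div_of_le (by positivity)
    exact pow_le_pow_right₀ (by norm_num) hn
  have hδsm : δ < min (min rg rh) (ε₀/M) := lt_of_le_of_lt hδN hN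
  have hδrg : δ < rg := lt_of_lt_of_le hδsm (le_trans (min_le_left _ _) (min_le_left _ _))
  have hδrh : δ < rh := lt_of_lt_of_le hδsm (le_trans (min_le_left _ _) (min_le_right _ _))
  have hδM : M * δ ≤ ε₀ := by
    have : δ < ε₀/M := lt_of_lt_of_le hδsm (min_le_right _ _)
    rw [lt_div_iff₀ hMpos] at this
    linarith [this]
  have hcard : (2^n : ℝ) * δ = 1 := by
    rw [hδdef]
    field_simp
  -- the per-square estimate
  have key : ∀ i j : Fin (2^n),
      |sqTerm f g h δ ((i:ℝ)*δ) ((j:ℝ)*δ) - 4*(δ^2 * Φ ((i:ℝ)*δ, (j:ℝ)*δ))|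
        ≤ 200*M^2*ε₀*δ^2 := by
    intro i j
    have hcoord : ∀ k : Fin (2^n), 0 ≤ (k:ℝ)*δ ∧ (k:ℝ)*δ + δ ≤ 1 := by
      intro k
      constructor
      · positivity
      · have hk : (k:ℝ) + 1 ≤ (2:ℝ)^n := by
          have := Nat.add_one_le_iff.mpr k.isLt
          calc (k:ℝ) + 1 = ((k + 1 : ℕ) : ℝ) := by push_cast; ring
            _ ≤ ((2^n : ℕ) : ℝ) := by exact_mod_cast Nat.cast_le.mpr this
            _ = (2:ℝ)^n := by push_cast; ring
        calc (k:ℝ)*δ + δ = ((k:ℝ) + 1) * δ := by ring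
          _ ≤ (2:ℝ)^n * δ := mul_le_mul_of_nonneg_right hk hδpos.le
          _ = 1 := hcard
    rw [hΦ]
    exact square_est f g h hf hg hh hM hMf hMfd hMgd hMhd hε₀pos hε₀half hmodg hmodh
      hδpos hδ1 hδrg hδrh hδM (hcoord i).1 (hcoord j).1 (hcoord i).2 (hcoord j).2
  -- assemble
  rw [Real.dist_eq, sub_zero]
  have heq : (1/2 : ℝ) * (∑ i : Fin (2^n), ∑ j : Fin (2^n), sqTerm f g h δ ((i:ℝ)*δ) ((j:ℝ)*δ))
      - 2 * ∑ i : Fin (2^n), ∑ j : Fin (2^n), δ^2 * Φ ((i:ℝ)*δ, (j:ℝ)*δ)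
      = (1/2) * ∑ i : Fin (2^n), ∑ j : Fin (2^n),
          (sqTerm f g h δ ((i:ℝ)*δ) ((j:ℝ)*δ) - 4*(δ^2 * Φ ((i:ℝ)*δ, (j:ℝ)*δ))) := by
    have hx : (∑ i : Fin (2^n), ∑ j : Fin (2^n),
        (sqTerm f g h δ ((i:ℝ)*δ) ((j:ℝ)*δ) - 4*(δ^2 * Φ ((i:ℝ)*δ, (j:ℝ)*δ))))
        = (∑ i : Fin (2^n), ∑ j : Fin (2^n), sqTerm f g h δ ((i:ℝ)*δ) ((j:ℝ)*δ))
          - 4 * ∑ i : Fin (2^n), ∑ j : Fin (2^n), δ^2 * Φ ((i:ℝ)*δ, (j:ℝ)*δ) := by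
      simp only [Finset.sum_sub_distrib, ← Finset.mul_sum]
    rw [hx]
    ring
  rw [heq]
  have hstep : |∑ i : Fin (2^n), ∑ j : Fin (2^n),
      (sqTerm f g h δ ((i:ℝ)*δ) ((j:ℝ)*δ) - 4*(δ^2 * Φ ((i:ℝ)*δ, (j:ℝ)*δ)))|
      ≤ ∑ _i : Fin (2^n), ∑ _j : Fin (2^n), 200*M^2*ε₀*δ^2 := by
    refine le_trans (Finset.abs_sum_le_sum_abs _ _) (Finset.sum_le_sum fun i _ => ?_)
    exact le_trans (Finset.abs_sum_le_sum_abs _ _) (Finset.sum_le_sum fun j _ => key i j)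
  have htot : (∑ _i : Fin (2^n), ∑ _j : Fin (2^n), (200*M^2*ε₀*δ^2 : ℝ))
      = 200*M^2*ε₀ := by
    simp only [Finset.sum_const, Finset.card_univ, Fintype.card_fin, nsmul_eq_mul]
    rw [hδdef]
    push_cast
    field_simp
  have hfin : |(1/2 : ℝ) * ∑ i : Fin (2^n), ∑ j : Fin (2^n),
      (sqTerm f g h δ ((i:ℝ)*δ) ((j:ℝ)*δ) - 4*(δ^2 * Φ ((i:ℝ)*δ, (j:ℝ)*δ)))|
      ≤ 100*M^2*ε₀ := by
    rw [abs_mul, abs_of_pos (by norm_num : (0:ℝ) < 1/2)]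
    calc (1/2 : ℝ) * |∑ i : Fin (2^n), ∑ j : Fin (2^n),
        (sqTerm f g h δ ((i:ℝ)*δ) ((j:ℝ)*δ) - 4*(δ^2 * Φ ((i:ℝ)*δ, (j:ℝ)*δ)))|
        ≤ (1/2) * (200*M^2*ε₀) := by
          apply mul_le_mul_of_nonneg_left _ (by norm_num)
          rw [← htot]
          exact hstep
      _ = 100*M^2*ε₀ := by ring
    
  calc |(1/2 : ℝ) * ∑ i : Fin (2^n), ∑ j : Fin (2^n),
      (sqTerm f g h δ ((i:ℝ)*δ) ((j:ℝ)*δ) - 4*(δ^2 * Φ ((i:ℝ)*δ, (j:ℝ)*δ)))|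
      ≤ 100*M^2*ε₀ := hfin
    _ ≤ 100*M^2*(ε' / (200*M^2)) := by
        apply mul_le_mul_of_nonneg_left (min_le_right _ _) (by positivity)
    _ = ε'/2 := by field_simp; ring
    _ < ε' := by linarith
end
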